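/- arXiv:2210.06767 — 5 statements merged into one kernel-verified Lean document; each statement's English description precedes it below -/
import Mathlib

section
/- Let f be a polynomial in n variables with coefficients in ℤ_p and let k ≥ 1 be an integer. Then μ({u ∈ ℤ_p^n : |f(u)|_p ≤ p^{-k}}) = N_k(f) / p^{kn}, where N_k(f) is the number of points x ∈ (ℤ/p^k ℤ)^n at which the reduction of f modulo p^k vanishes. -/
open MeasureTheory
open scoped ENNReal

noncomputable instance (p : ℕ) [Fact p.Prime] : MeasurableSpace ℚ_[p] := borel _
instance (p : ℕ) [Fact p.Prime] : BorelSpace ℚ_[p] := ⟨rfl⟩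

/-- `N_k(f)`: the number of points of `(ℤ/p^kℤ)^n` at which the reduction of
`f ∈ ℤ_p[X_1,…,X_n]` modulo `p^k` vanishes. -/
noncomputable def Nzeros (p : ℕ) [Fact p.Prime] (n : ℕ)
    (f : MvPolynomial (Fin n) ℤ_[p]) (k : ℕ) : ℕ :=
  Nat.card {x : Fin n → ZMod (p ^ k) //
    MvPolynomial.eval x (f.map (PadicInt.toZModPow k)) = 0}

/-!
Reduction modulo `p ^ k` cuts the unit polydisc `ℤ_p^n` into the `p ^ (k n)` closed polydiscs
of radius `p⁻ᵏ` around the lifts of the points of `(ℤ/p^kℤ)^n`; they are translates of each other,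
so each has Haar measure `p^(-k n)`. Since `|f(u)|_p ≤ p⁻ᵏ` means that `f` vanishes modulo `p ^ k`
at the reduction of `u`, the set in question is the union of the polydiscs over the `N_k(f)` zeros.
-/

namespace PadicInt

variable {p : ℕ} [Fact p.Prime]

theorem toZModPow_eq_zero_iff_norm_le (k : ℕ) (z : ℤ_[p]) :
    toZModPow k z = 0 ↔ ‖z‖ ≤ ((p : ℝ) ^ k)⁻¹ := by
  rw [← zpow_natCast, ← zpow_neg, norm_le_pow_iff_mem_span_pow, ← ker_toZModPow,
    RingHom.mem_ker]

theorem toZModPow_eq_iff_norm_sub_le (k : ℕ) (z : ℤ_[p]) (a : ZMod (p ^ k)) :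
    toZModPow k z = a ↔ ‖z - a.val‖ ≤ ((p : ℝ) ^ k)⁻¹ := by
  rw [← toZModPow_eq_zero_iff_norm_le, map_sub, map_natCast, ZMod.natCast_zmod_val, sub_eq_zero]

theorem exists_coe_comp_eq_iff {ι : Type*} (u : ι → ℚ_[p]) :
    (∃ v : ι → ℤ_[p], (↑) ∘ v = u) ↔ ∀ j, ‖u j‖ ≤ 1 :=
  ⟨fun ⟨v, hv⟩ j => hv ▸ (v j).norm_le_one, fun hu => ⟨fun j => ⟨u j, hu j⟩, rfl⟩⟩

end PadicInt

open PadicInt Function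

section ResidueBox

variable (p : ℕ) [Fact p.Prime] {ι : Type*}

def residueBox (k : ℕ) (x : ι → ZMod (p ^ k)) : Set (ι → ℚ_[p]) :=
  {u | ∀ j, ‖u j - ((x j).val : ℚ_[p])‖ ≤ ((p : ℝ) ^ k)⁻¹}

variable {p}

theorem mem_residueBox_iff {k : ℕ} {x : ι → ZMod (p ^ k)} {u : ι → ℚ_[p]} :
    u ∈ residueBox p k x ↔ ∃ v : ι → ℤ_[p], (↑) ∘ v = u ∧ toZModPow k ∘ v = x := by
  constructor
  · intro hu
    have hint : ∀ j, ‖u j‖ ≤ 1 := by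
      intro j
      have hr : ((p : ℝ) ^ k)⁻¹ ≤ 1 :=
        inv_le_one_of_one_le₀ (one_le_pow₀ (by exact_mod_cast (Fact.out : p.Prime).one_le))
      calc ‖u j‖ = ‖(u j - (x j).val) + (((x j).val : ℤ_[p]) : ℚ_[p])‖ := by
            rw [coe_natCast, sub_add_cancel]
        _ ≤ max ‖u j - (x j).val‖ ‖((x j).val : ℤ_[p])‖ := Padic.nonarchimedean _ _
        _ ≤ 1 := max_le ((hu j).trans hr) (norm_le_one _)
    refine ⟨fun j => ⟨u j, hint j⟩, rfl, funext fun j => ?_⟩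
    exact (toZModPow_eq_iff_norm_sub_le k _ _).2 (hu j)
  · rintro ⟨v, rfl, rfl⟩ j
    exact (toZModPow_eq_iff_norm_sub_le k (v j) _).1 rfl

theorem measurableSet_residueBox [Finite ι] (k : ℕ) (x : ι → ZMod (p ^ k)) :
    MeasurableSet (residueBox p k x) := by
  simp only [residueBox, Set.ofPred_forall]
  exact .iInter fun j => measurableSet_le (by fun_prop) measurable_const

theorem pairwise_disjoint_residueBox (k : ℕ) :
    Pairwise (Disjoint on (residueBox p k : (ι → ZMod (p ^ k)) → Set (ι → ℚ_[p]))) := by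
  refine fun x y hxy => Set.disjoint_left.2 fun u hx hy => hxy ?_
  obtain ⟨v, rfl, rfl⟩ := mem_residueBox_iff.1 hx
  obtain ⟨w, hvw, rfl⟩ := mem_residueBox_iff.1 hy
  rw [(Subtype.val_injective.comp_left hvw.symm :)]

theorem setOf_forall_norm_le_one_eq_iUnion_residueBox (k : ℕ) :
    {u : ι → ℚ_[p] | ∀ j, ‖u j‖ ≤ 1} = ⋃ x, residueBox p k x := by
  ext u
  simp only [Set.mem_ofPred_eq, Set.mem_iUnion, mem_residueBox_iff, ← exists_coe_comp_eq_iff]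
  exact ⟨fun ⟨v, hv⟩ => ⟨_, v, hv, rfl⟩, fun ⟨_, v, hv, _⟩ => ⟨v, hv⟩⟩

theorem residueBox_eq_preimage_add (k : ℕ) (x : ι → ZMod (p ^ k)) :
    residueBox p k x = (· + -fun j => ((x j).val : ℚ_[p])) ⁻¹' residueBox p k 0 := by
  ext u
  simp [residueBox, sub_eq_add_neg]

theorem measure_residueBox [Fintype ι] (μ : Measure (ι → ℚ_[p])) [μ.IsAddRightInvariant]
    (hμ : μ {u : ι → ℚ_[p] | ∀ j, ‖u j‖ ≤ 1} = 1) (k : ℕ) (x : ι → ZMod (p ^ k)) :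
    μ (residueBox p k x) = ((p : ℝ≥0∞) ^ (k * Fintype.card ι))⁻¹ := by
  classical
  have hbox : ∀ y, μ (residueBox p k y) = μ (residueBox p k 0) := fun y => by
    rw [residueBox_eq_preimage_add, measure_preimage_add_right]
  have hcard : Fintype.card (ι → ZMod (p ^ k)) = p ^ (k * Fintype.card ι) := by
    rw [Fintype.card_fun, ZMod.card, ← pow_mul]
  have htotal : (p : ℝ≥0∞) ^ (k * Fintype.card ι) * μ (residueBox p k 0) = 1 := by
    rw [← hμ, setOf_forall_norm_le_one_eq_iUnion_residueBox k,
      measure_iUnion (pairwise_disjoint_residueBox k) (measurableSet_residueBox k), tsum_fintype,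
      Finset.sum_congr rfl fun y _ => hbox y, Finset.sum_const, Finset.card_univ, hcard,
      nsmul_eq_mul, Nat.cast_pow]
  rw [hbox]
  exact ENNReal.eq_inv_of_mul_eq_one_left (by rwa [mul_comm])

theorem setOf_norm_eval_le_eq_biUnion_residueBox [Fintype ι] [DecidableEq ι]
    (f : MvPolynomial ι ℤ_[p]) (k : ℕ) :
    {u : ι → ℚ_[p] | (∀ j, ‖u j‖ ≤ 1) ∧
        ‖MvPolynomial.eval u (f.map PadicInt.Coe.ringHom)‖ ≤ ((p : ℝ) ^ k)⁻¹} =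
      ⋃ x ∈ Finset.univ.filter (fun x => MvPolynomial.eval x (f.map (toZModPow k)) = 0),
        residueBox p k x := by
  have hnorm (v : ι → ℤ_[p]) :
      ‖MvPolynomial.eval ((↑) ∘ v) (f.map Coe.ringHom)‖ = ‖MvPolynomial.eval v f‖ :=
    congrArg norm (MvPolynomial.map_eval Coe.ringHom v f).symm
  ext u
  simp only [Set.mem_ofPred_eq, Set.mem_iUnion, Finset.mem_filter, Finset.mem_univ, true_and,
    exists_prop, mem_residueBox_iff]
  constructor
  · rintro ⟨hu, hf⟩
    obtain ⟨v, rfl⟩ := (exists_coe_comp_eq_iff u).2 hu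
    refine ⟨_, ?_, v, rfl, rfl⟩
    rwa [← MvPolynomial.map_eval, toZModPow_eq_zero_iff_norm_le, ← hnorm]
  · rintro ⟨_, hx, v, rfl, rfl⟩
    rw [← MvPolynomial.map_eval, toZModPow_eq_zero_iff_norm_le, ← hnorm] at hx
    exact ⟨(exists_coe_comp_eq_iff _).1 ⟨v, rfl⟩, hx⟩

end ResidueBox

theorem stmt3_general (p : ℕ) [Fact p.Prime] (n : ℕ)
    (μ : Measure (Fin n → ℚ_[p])) [μ.IsAddHaarMeasure]
    (hμ : μ {u : Fin n → ℚ_[p] | ∀ j, ‖u j‖ ≤ 1} = 1)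
    (f : MvPolynomial (Fin n) ℤ_[p]) (k : ℕ) :
    μ {u : Fin n → ℚ_[p] | (∀ j, ‖u j‖ ≤ 1) ∧
        ‖MvPolynomial.eval u (f.map (PadicInt.Coe.ringHom))‖ ≤ ((p : ℝ) ^ k)⁻¹}
      = (Nzeros p n f k : ℝ≥0∞) / (p : ℝ≥0∞) ^ (k * n) := by
  rw [setOf_norm_eval_le_eq_biUnion_residueBox,
    measure_biUnion_finset ((pairwise_disjoint_residueBox k).set_pairwise _)
      fun x _ => measurableSet_residueBox k x,
    Finset.sum_congr rfl fun x _ => measure_residueBox μ hμ k x, Finset.sum_const, nsmul_eq_mul,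
    Nzeros, Nat.card_eq_fintype_card, Fintype.card_subtype, Fintype.card_fin,
    div_eq_mul_inv]

/-- For `f ∈ ℤ_p[X_1,…,X_n]` and `k ≥ 1`,
`μ({u ∈ ℤ_p^n : |f(u)|_p ≤ p^{-k}}) = N_k(f) / p^{kn}`, where `μ` is the Haar measure on
`ℚ_p^n` normalized by `μ(ℤ_p^n) = 1`. -/
theorem stmt3 (p : ℕ) [Fact p.Prime] (n : ℕ)
    (μ : Measure (Fin n → ℚ_[p])) [μ.IsAddHaarMeasure]
    (hμ : μ {u : Fin n → ℚ_[p] | ∀ j, ‖u j‖ ≤ 1} = 1)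
    (f : MvPolynomial (Fin n) ℤ_[p]) (k : ℕ) (hk : 1 ≤ k) :
    μ {u : Fin n → ℚ_[p] | (∀ j, ‖u j‖ ≤ 1) ∧
        ‖MvPolynomial.eval u (f.map (PadicInt.Coe.ringHom))‖ ≤ ((p : ℝ) ^ k)⁻¹}
      = (Nzeros p n f k : ℝ≥0∞) / (p : ℝ≥0∞) ^ (k * n) :=
  stmt3_general p n μ hμ f k
end

section
/- Let f be a nonzero polynomial in n variables with coefficients in ℤ_p and let s > 0 be a real number. Then ∫_{ℤ_p^n} |f(u)|_p^s dμ(u) = 1 - (p^s - 1) · Σ_{k=1}^∞ N_k(f) · p^{-k(n+s)}, where the series on the right converges. -/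
open MeasureTheory
open scoped ENNReal

namespace PadicAux

variable (p : ℕ) [Fact p.Prime] (n : ℕ)

/-- Constructor for `ℤ_[p]` avoiding anonymous-constructor elaboration issues. -/
def pmk (a : ℚ_[p]) (h : ‖a‖ ≤ 1) : ℤ_[p] := ⟨a, h⟩

@[simp] lemma coe_pmk (a : ℚ_[p]) (h : ‖a‖ ≤ 1) : ((pmk p a h : ℤ_[p]) : ℚ_[p]) = a := rfl

/-- The unit "ball" `ℤ_p^n` inside `ℚ_p^n`. -/
def pB : Set (Fin n → ℚ_[p]) := {u | ∀ j, ‖u j‖ ≤ 1}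

/-- The coset of `(p^k ℤ_p)^n` indexed by `x : (ℤ/p^k)^n`. -/
def pC (k : ℕ) (x : Fin n → ZMod (p ^ k)) : Set (Fin n → ℚ_[p]) :=
  {u | ∀ j, ‖u j - (((x j).val : ℕ) : ℚ_[p])‖ ≤ (p : ℝ) ^ (-(k : ℤ))}

lemma norm_coe_le_pow_iff (k : ℕ) (z : ℤ_[p]) :
    ‖(z : ℚ_[p])‖ ≤ (p : ℝ) ^ (-(k : ℤ)) ↔ PadicInt.toZModPow k z = 0 := by
  rw [← PadicInt.norm_def, PadicInt.norm_le_pow_iff_mem_span_pow,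
    ← PadicInt.ker_toZModPow, RingHom.mem_ker]

lemma one_lt_p : (1 : ℝ) < p := by exact_mod_cast (Fact.out : p.Prime).one_lt

lemma pow_neg_le_one (k : ℕ) : (p : ℝ) ^ (-(k : ℤ)) ≤ 1 :=
  zpow_le_one_of_nonpos₀ (le_of_lt (one_lt_p p)) (by simp)

lemma mem_pC_iff (k : ℕ) (x : Fin n → ZMod (p ^ k)) (u : Fin n → ℚ_[p]) :
    u ∈ pC p n k x ↔ ∃ h : ∀ j, ‖u j‖ ≤ 1,
      ∀ j, PadicInt.toZModPow k (pmk p (u j) (h j)) = x j := by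
  constructor
  · intro hu
    have h1 : ∀ j, ‖u j‖ ≤ 1 := by
      intro j
      have h2 : u j = (u j - (((x j).val : ℕ) : ℚ_[p])) + (((x j).val : ℕ) : ℚ_[p]) := by ring
      rw [h2]
      refine le_trans (Padic.nonarchimedean _ _) (max_le ?_ ?_)
      · exact le_trans (hu j) (pow_neg_le_one p k)
      · have h3 : ((((x j).val : ℕ) : ℚ_[p])) = (((((x j).val : ℕ) : ℤ_[p])) : ℚ_[p]) := by
          push_cast; ring
        rw [h3, ← PadicInt.norm_def]
        exact PadicInt.norm_le_one _
    refine ⟨h1, fun j => ?_⟩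
    have hz : ((pmk p (u j) (h1 j) - (((x j).val : ℕ) : ℤ_[p]) : ℤ_[p]) : ℚ_[p])
        = u j - (((x j).val : ℕ) : ℚ_[p]) := by
      push_cast [pmk]; rfl
    have h3 := (norm_coe_le_pow_iff p k _).1 (by rw [hz]; exact hu j)
    rw [map_sub, map_natCast, ZMod.natCast_zmod_val, sub_eq_zero] at h3
    exact h3
  · rintro ⟨h1, h2⟩ j
    have hz : ((pmk p (u j) (h1 j) - (((x j).val : ℕ) : ℤ_[p]) : ℤ_[p]) : ℚ_[p])
        = u j - (((x j).val : ℕ) : ℚ_[p]) := by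
      push_cast [pmk]; rfl
    rw [← hz, norm_coe_le_pow_iff p k, map_sub, map_natCast, ZMod.natCast_zmod_val,
      sub_eq_zero]
    exact h2 j

lemma isClosed_pC (k : ℕ) (x : Fin n → ZMod (p ^ k)) : IsClosed (pC p n k x) := by
  have h : pC p n k x = ⋂ j, {u : Fin n → ℚ_[p] |
      ‖u j - (((x j).val : ℕ) : ℚ_[p])‖ ≤ (p : ℝ) ^ (-(k : ℤ))} := by
    ext u; simp [pC, Set.mem_iInter]
  rw [h]
  exact isClosed_iInter fun j => isClosed_le (((continuous_apply j).sub continuous_const).norm)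
    continuous_const

lemma isClosed_pB : IsClosed (pB p n) := by
  have h : pB p n = ⋂ j, {u : Fin n → ℚ_[p] | ‖u j‖ ≤ 1} := by
    ext u; simp [pB, Set.mem_iInter]
  rw [h]
  exact isClosed_iInter fun j => isClosed_le ((continuous_apply j).norm) continuous_const

lemma iUnion_pC (k : ℕ) : (⋃ x : Fin n → ZMod (p ^ k), pC p n k x) = pB p n := by
  ext u
  simp only [Set.mem_iUnion]
  constructor
  · rintro ⟨x, hx⟩
    exact ((mem_pC_iff p n k x u).1 hx).choose
  · intro hu
    refine ⟨fun j => PadicInt.toZModPow k (pmk p (u j) (hu j)), ?_⟩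
    exact (mem_pC_iff p n k _ u).2 ⟨hu, fun j => rfl⟩

lemma pairwise_disjoint_pC (k : ℕ) :
    Pairwise (Function.onFun Disjoint fun x : Fin n → ZMod (p ^ k) => pC p n k x) := by
  intro x y hxy
  rw [Function.onFun, Set.disjoint_left]
  intro u hux huy
  obtain ⟨h1, h2⟩ := (mem_pC_iff p n k x u).1 hux
  obtain ⟨h1', h2'⟩ := (mem_pC_iff p n k y u).1 huy
  exact hxy (funext fun j => (h2 j).symm.trans (h2' j))

lemma measure_pC_eq (μ : Measure (Fin n → ℚ_[p])) [μ.IsAddHaarMeasure]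
    (k : ℕ) (x y : Fin n → ZMod (p ^ k)) : μ (pC p n k x) = μ (pC p n k y) := by
  have hset : pC p n k x =
      (fun u => (fun j => (((y j).val : ℕ) : ℚ_[p]) - (((x j).val : ℕ) : ℚ_[p])) + u) ⁻¹'
        pC p n k y := by
    ext u
    simp only [Set.mem_preimage, pC, Set.mem_setOf_eq, Pi.add_apply]
    constructor
    · intro h j; have h' := h j
      have heq : (((y j).val : ℕ) : ℚ_[p]) - (((x j).val : ℕ) : ℚ_[p]) + u j
          - (((y j).val : ℕ) : ℚ_[p]) = u j - (((x j).val : ℕ) : ℚ_[p]) := by ring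
      rw [heq]; exact h'
    · intro h j; have h' := h j
      have heq : (((y j).val : ℕ) : ℚ_[p]) - (((x j).val : ℕ) : ℚ_[p]) + u j
          - (((y j).val : ℕ) : ℚ_[p]) = u j - (((x j).val : ℕ) : ℚ_[p]) := by ring
      rw [heq] at h'; exact h'
  rw [hset, measure_preimage_add]

lemma measure_pC (μ : Measure (Fin n → ℚ_[p])) [μ.IsAddHaarMeasure]
    (hμ : μ (pB p n) = 1) (k : ℕ) (x : Fin n → ZMod (p ^ k)) :
    μ (pC p n k x) = ((p ^ (k * n) : ℕ) : ℝ≥0∞)⁻¹ := by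
  have hcard : Fintype.card (Fin n → ZMod (p ^ k)) = p ^ (k * n) := by
    rw [Fintype.card_fun, ZMod.card, Fintype.card_fin, ← pow_mul]
  have hsum : μ (pB p n) = ∑' y : Fin n → ZMod (p ^ k), μ (pC p n k y) := by
    rw [← iUnion_pC p n k]
    exact measure_iUnion (pairwise_disjoint_pC p n k)
      (fun y => (isClosed_pC p n k y).measurableSet)
  rw [hμ, tsum_fintype] at hsum
  have hconst : ∀ y ∈ Finset.univ, μ (pC p n k y) = μ (pC p n k x) :=
    fun y _ => measure_pC_eq p n μ k y x
  rw [Finset.sum_congr rfl hconst, Finset.sum_const, Finset.card_univ, hcard,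
    nsmul_eq_mul] at hsum
  exact ENNReal.eq_inv_of_mul_eq_one_left (by rw [mul_comm]; exact hsum.symm)

variable (f : MvPolynomial (Fin n) ℤ_[p])

/-- The set `{u ∈ ℤ_p^n : |f(u)| ≤ p^{-k}}`. -/
def pT (k : ℕ) : Set (Fin n → ℚ_[p]) :=
  {u | (∀ j, ‖u j‖ ≤ 1) ∧
    ‖MvPolynomial.eval u (f.map PadicInt.Coe.ringHom)‖ ≤ (p : ℝ) ^ (-(k : ℤ))}

lemma eval_coe (v : Fin n → ℤ_[p]) :
    MvPolynomial.eval (fun j => ((v j : ℤ_[p]) : ℚ_[p])) (f.map PadicInt.Coe.ringHom)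
      = ((MvPolynomial.eval v f : ℤ_[p]) : ℚ_[p]) := by
  rw [MvPolynomial.eval_map]
  have hc := MvPolynomial.eval₂_comp_left PadicInt.Coe.ringHom (RingHom.id ℤ_[p]) v f
  rw [MvPolynomial.eval₂_id, RingHom.comp_id] at hc
  exact hc.symm

lemma eval_coe' (u : Fin n → ℚ_[p]) (h : ∀ j, ‖u j‖ ≤ 1) :
    MvPolynomial.eval u (f.map PadicInt.Coe.ringHom)
      = ((MvPolynomial.eval (fun j => pmk p (u j) (h j)) f : ℤ_[p]) : ℚ_[p]) := by
  have hu : u = fun j => (((pmk p (u j) (h j) : ℤ_[p])) : ℚ_[p]) := funext fun j => rfl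
  conv_lhs => rw [hu]
  exact eval_coe p n f _

lemma eval_toZModPow (k : ℕ) (v : Fin n → ℤ_[p]) :
    PadicInt.toZModPow k (MvPolynomial.eval v f)
      = MvPolynomial.eval (fun j => PadicInt.toZModPow k (v j))
          (f.map (PadicInt.toZModPow k)) := by
  rw [MvPolynomial.eval_map]
  have hc := MvPolynomial.eval₂_comp_left (PadicInt.toZModPow k) (RingHom.id ℤ_[p]) v f
  rw [MvPolynomial.eval₂_id, RingHom.comp_id] at hc
  exact hc

lemma pT_eq_iUnion (k : ℕ) :
    pT p n f k = ⋃ r : {x : Fin n → ZMod (p ^ k) //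
        MvPolynomial.eval x (f.map (PadicInt.toZModPow k)) = 0}, pC p n k r.1 := by
  ext u
  simp only [Set.mem_iUnion, pT, Set.mem_setOf_eq]
  constructor
  · rintro ⟨h1, h2⟩
    rw [eval_coe' p n f u h1, norm_coe_le_pow_iff p k, eval_toZModPow] at h2
    refine ⟨⟨fun j => PadicInt.toZModPow k (pmk p (u j) (h1 j)), h2⟩, ?_⟩
    exact (mem_pC_iff p n k _ u).2 ⟨h1, fun j => rfl⟩
  · rintro ⟨r, hr⟩
    obtain ⟨h1, h2⟩ := (mem_pC_iff p n k r.1 u).1 hr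
    refine ⟨h1, ?_⟩
    rw [eval_coe' p n f u h1, norm_coe_le_pow_iff p k, eval_toZModPow]
    have hfe : (fun j => PadicInt.toZModPow k (pmk p (u j) (h1 j))) = r.1 := funext h2
    rw [hfe]
    exact r.2

lemma measurableSet_pT (k : ℕ) : MeasurableSet (pT p n f k) := by
  have h : pT p n f k = pB p n ∩
      {u | ‖MvPolynomial.eval u (f.map PadicInt.Coe.ringHom)‖ ≤ (p : ℝ) ^ (-(k : ℤ))} := rfl
  rw [h]
  exact ((isClosed_pB p n).inter (isClosed_le
    ((MvPolynomial.continuous_eval _).norm) continuous_const)).measurableSet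

lemma measure_pT (μ : Measure (Fin n → ℚ_[p])) [μ.IsAddHaarMeasure]
    (hμ : μ (pB p n) = 1) (k : ℕ) :
    μ (pT p n f k) = (Nzeros p n f k : ℝ≥0∞) * ((p ^ (k * n) : ℕ) : ℝ≥0∞)⁻¹ := by
  classical
  set K := {x : Fin n → ZMod (p ^ k) //
    MvPolynomial.eval x (f.map (PadicInt.toZModPow k)) = 0} with hK
  have hdisj : Pairwise (Function.onFun Disjoint fun r : K => pC p n k r.1) := by
    intro r r' hrr'
    exact pairwise_disjoint_pC p n k (fun h => hrr' (Subtype.ext h))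
  have hmeas : ∀ r : K, MeasurableSet (pC p n k r.1) :=
    fun r => (isClosed_pC p n k r.1).measurableSet
  rw [pT_eq_iUnion p n f k, measure_iUnion hdisj hmeas, tsum_fintype]
  have hconst : ∀ r ∈ (Finset.univ : Finset K),
      μ (pC p n k r.1) = ((p ^ (k * n) : ℕ) : ℝ≥0∞)⁻¹ :=
    fun r _ => measure_pC p n μ hμ k r.1
  rw [Finset.sum_congr rfl hconst, Finset.sum_const, Finset.card_univ, nsmul_eq_mul,
    Nzeros, Nat.card_eq_fintype_card]

lemma pT_zero : pT p n f 0 = pB p n := by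
  ext u
  simp only [pT, pB, Set.mem_setOf_eq, Nat.cast_zero, neg_zero, zpow_zero]
  refine ⟨fun h => h.1, fun h => ⟨h, ?_⟩⟩
  rw [eval_coe' p n f u h, ← PadicInt.norm_def]
  exact PadicInt.norm_le_one _

lemma pT_antitone (k : ℕ) : pT p n f (k + 1) ⊆ pT p n f k := by
  intro u hu
  refine ⟨hu.1, le_trans hu.2 ?_⟩
  apply zpow_le_zpow_right₀ (le_of_lt (one_lt_p p))
  omega

end PadicAux

/-- For a nonzero `f ∈ ℤ_p[X_1,…,X_n]` and real `s > 0`,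
`∫_{ℤ_p^n} |f(u)|_p^s dμ(u) = 1 - (p^s - 1) · Σ_{k=1}^∞ N_k(f) · p^{-k(n+s)}`,
where the series converges and `μ` is the Haar measure on `ℚ_p^n` with `μ(ℤ_p^n) = 1`. -/
theorem stmt4 (p : ℕ) [Fact p.Prime] (n : ℕ)
    (μ : Measure (Fin n → ℚ_[p])) [μ.IsAddHaarMeasure]
    (hμ : μ {u : Fin n → ℚ_[p] | ∀ j, ‖u j‖ ≤ 1} = 1)
    (f : MvPolynomial (Fin n) ℤ_[p]) (hf : f ≠ 0) (s : ℝ) (hs : 0 < s) :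
    Summable (fun k : ℕ =>
        (Nzeros p n f (k + 1) : ℝ) * (p : ℝ) ^ (-((k : ℝ) + 1) * ((n : ℝ) + s))) ∧
    (∫ u in {u : Fin n → ℚ_[p] | ∀ j, ‖u j‖ ≤ 1},
        ‖MvPolynomial.eval u (f.map (PadicInt.Coe.ringHom))‖ ^ s ∂μ)
      = 1 - ((p : ℝ) ^ s - 1)
          * ∑' k : ℕ, (Nzeros p n f (k + 1) : ℝ) * (p : ℝ) ^ (-((k : ℝ) + 1) * ((n : ℝ) + s)) := by
  classical
  have hp1 : (1 : ℝ) < p := PadicAux.one_lt_p p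
  have hp0 : (0 : ℝ) < p := lt_trans one_pos hp1
  set T : ℕ → Set (Fin n → ℚ_[p]) := fun k => PadicAux.pT p n f k with hT
  set S : ℕ → Set (Fin n → ℚ_[p]) := fun k => T k \ T (k + 1) with hSdef
  set c : ℕ → ℝ := fun k => (p : ℝ) ^ (-(k : ℝ) * s) with hc
  set A : ℕ → ℝ := fun k => (μ (T k)).toReal with hA
  have hμB : μ (PadicAux.pB p n) = 1 := hμ
  have hTB : ∀ k, T k ⊆ PadicAux.pB p n := fun k u hu => hu.1
  have hμT_le : ∀ k, μ (T k) ≤ 1 := fun k => le_of_le_of_eq (measure_mono (hTB k)) hμB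
  have hμT_ne : ∀ k, μ (T k) ≠ ⊤ := fun k => ne_top_of_le_ne_top ENNReal.one_ne_top (hμT_le k)
  have hmeasT : ∀ k, MeasurableSet (T k) := fun k => PadicAux.measurableSet_pT p n f k
  have hmeasS : ∀ k, MeasurableSet (S k) := fun k => (hmeasT k).diff (hmeasT (k + 1))
  have hA0 : A 0 = 1 := by
    rw [hA]; simp only [hT, PadicAux.pT_zero p n f, hμB, ENNReal.toReal_one]
  have hA_nonneg : ∀ k, 0 ≤ A k := fun k => ENNReal.toReal_nonneg
  have hA_le_one : ∀ k, A k ≤ 1 := by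
    intro k
    rw [hA]
    calc (μ (T k)).toReal ≤ (1 : ℝ≥0∞).toReal :=
      ENNReal.toReal_mono ENNReal.one_ne_top (hμT_le k)
    _ = 1 := ENNReal.toReal_one
  have hAval : ∀ k, A k = (Nzeros p n f k : ℝ) * ((p : ℝ) ^ (k * n : ℕ))⁻¹ := by
    intro k
    rw [hA]
    simp only [hT, PadicAux.measure_pT p n f μ hμB k]
    rw [ENNReal.toReal_mul, ENNReal.toReal_inv, ENNReal.toReal_natCast, ENNReal.toReal_natCast]
    push_cast
    ring
  have hμS : ∀ k, (μ (S k)).toReal = A k - A (k + 1) := by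
    intro k
    rw [hSdef]
    simp only
    rw [measure_diff (PadicAux.pT_antitone p n f k) (hmeasT (k + 1)).nullMeasurableSet
      (hμT_ne (k + 1))]
    rw [ENNReal.toReal_sub_of_le (measure_mono (PadicAux.pT_antitone p n f k)) (hμT_ne k)]
  have hc_pos : ∀ k, 0 < c k := fun k => Real.rpow_pos_of_pos hp0 _
  have hr0 : (0 : ℝ) ≤ (p : ℝ) ^ (-s) := le_of_lt (Real.rpow_pos_of_pos hp0 _)
  have hr1 : (p : ℝ) ^ (-s) < 1 :=
    Real.rpow_lt_one_of_one_lt_of_neg hp1 (neg_lt_zero.2 hs)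
  have hc_geo : ∀ k, c k = ((p : ℝ) ^ (-s)) ^ k := by
    intro k
    rw [hc]
    simp only
    rw [← Real.rpow_natCast ((p : ℝ) ^ (-s)) k, ← Real.rpow_mul (le_of_lt hp0)]
    ring_nf
  -- the indicator decomposition
  set G : ℕ → (Fin n → ℚ_[p]) → ℝ := fun k => (S k).indicator (fun _ => c k) with hG
  have key : ∀ u, (PadicAux.pB p n).indicator
      (fun u => ‖MvPolynomial.eval u (f.map PadicInt.Coe.ringHom)‖ ^ s) u
      = ∑' k, G k u := by
    intro u
    by_cases hu : u ∈ PadicAux.pB p n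
    · rw [Set.indicator_of_mem hu]
      by_cases hz : MvPolynomial.eval u (f.map PadicInt.Coe.ringHom) = 0
      · have hTall : ∀ k, u ∈ T k := by
          intro k
          exact ⟨hu, by rw [hz, norm_zero]; positivity⟩
        have hGz : ∀ k, G k u = 0 := by
          intro k
          rw [hG]
          simp only
          rw [Set.indicator_of_notMem (fun h => h.2 (hTall (k + 1)))]
        rw [hz, norm_zero, Real.zero_rpow (ne_of_gt hs)]
        simp only [hGz]
        exact (tsum_zero).symm
      · have hnorm : ‖MvPolynomial.eval u (f.map PadicInt.Coe.ringHom)‖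
            = (p : ℝ) ^ (-(MvPolynomial.eval u (f.map PadicInt.Coe.ringHom)).valuation) :=
          Padic.norm_eq_zpow_neg_valuation hz
        have hvnn : 0 ≤ (MvPolynomial.eval u (f.map PadicInt.Coe.ringHom)).valuation := by
          rw [← Padic.norm_le_one_iff_val_nonneg]
          rw [PadicAux.eval_coe' p n f u hu, ← PadicInt.norm_def]
          exact PadicInt.norm_le_one _
        set v : ℤ := (MvPolynomial.eval u (f.map PadicInt.Coe.ringHom)).valuation with hv
        set m : ℕ := v.toNat with hm
        have hmv : (m : ℤ) = v := Int.toNat_of_nonneg hvnn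
        have hmem : ∀ k : ℕ, u ∈ T k ↔ (k : ℤ) ≤ v := by
          intro k
          constructor
          · intro hk
            have h2 := hk.2
            rw [hnorm] at h2
            have h3 := (zpow_le_zpow_iff_right₀ hp1).1 h2
            omega
          · intro hk
            refine ⟨hu, ?_⟩
            rw [hnorm]
            exact zpow_le_zpow_right₀ (le_of_lt hp1) (by omega)
        have hmemS : u ∈ S m := by
          constructor
          · exact (hmem m).2 (by omega)
          · intro hin
            have h4 := (hmem (m + 1)).1 hin
            omega
        rw [tsum_eq_single m ?_]
        · rw [hG]
          simp only
          rw [Set.indicator_of_mem hmemS, hnorm, hc]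
          simp only
          have e1 : ((p : ℝ) ^ (-v : ℤ)) = (p : ℝ) ^ ((-v : ℤ) : ℝ) :=
            (Real.rpow_intCast _ _).symm
          rw [e1, ← Real.rpow_mul (le_of_lt hp0)]
          congr 1
          have : ((-v : ℤ) : ℝ) = -(m : ℝ) := by
            push_cast [← hmv]
            ring
          rw [this]
        · intro k hk
          rw [hG]
          simp only
          apply Set.indicator_of_notMem
          intro hin
          have h1 := (hmem k).1 hin.1
          have h2 : ¬ ((k : ℤ) + 1 ≤ v) := by
            intro hle
            exact hin.2 ((hmem (k + 1)).2 (by push_cast; omega))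
          omega
    · rw [Set.indicator_of_notMem hu]
      have hGz : ∀ k, G k u = 0 := by
        intro k
        rw [hG]
        simp only
        exact Set.indicator_of_notMem (fun h => hu (hTB k h.1)) _
      simp only [hGz]
      exact (tsum_zero).symm
  -- integrability bounds
  have hmeasG : ∀ k, AEStronglyMeasurable (G k) μ := fun k =>
    (stronglyMeasurable_const.indicator (hmeasS k)).aestronglyMeasurable
  have hborne : ∀ k, (∫⁻ a, ‖G k a‖₊ ∂μ) ≤ ENNReal.ofReal (c k) := by
    intro k
    have hpt : ∀ a, (‖G k a‖₊ : ℝ≥0∞) = (S k).indicator (fun _ => ENNReal.ofReal (c k)) a := by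
      intro a
      by_cases ha : a ∈ S k
      · rw [hG]
        simp only [Set.indicator_of_mem ha]
        exact Real.enorm_eq_ofReal (le_of_lt (hc_pos k))
      · rw [hG]
        simp only [Set.indicator_of_notMem ha, nnnorm_zero, ENNReal.coe_zero]
    calc (∫⁻ a, ‖G k a‖₊ ∂μ)
        = ∫⁻ a, (S k).indicator (fun _ => ENNReal.ofReal (c k)) a ∂μ := lintegral_congr hpt
      _ = ENNReal.ofReal (c k) * μ (S k) := by
          rw [lintegral_indicator (hmeasS k), setLIntegral_const]
      _ ≤ ENNReal.ofReal (c k) * 1 := by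
          gcongr
          exact le_trans (measure_mono Set.diff_subset) (hμT_le k)
      _ = ENNReal.ofReal (c k) := mul_one _
  have hsum_lint : (∑' k, ∫⁻ a, ‖G k a‖₊ ∂μ) ≠ ⊤ := by
    refine ne_top_of_le_ne_top ?_ (ENNReal.tsum_le_tsum hborne)
    have h5 : ∀ k, ENNReal.ofReal (c k) = (ENNReal.ofReal ((p : ℝ) ^ (-s))) ^ k := by
      intro k
      rw [hc_geo k, ENNReal.ofReal_pow hr0]
    rw [tsum_congr h5, ENNReal.tsum_geometric, ne_eq, ENNReal.inv_eq_top, tsub_eq_zero_iff_le]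
    exact not_le_of_gt (ENNReal.ofReal_lt_one.2 hr1)
  have hBmeas : MeasurableSet (PadicAux.pB p n) := (PadicAux.isClosed_pB p n).measurableSet
  -- the integral as a series
  have hint : (∫ u in {u : Fin n → ℚ_[p] | ∀ j, ‖u j‖ ≤ 1},
        ‖MvPolynomial.eval u (f.map (PadicInt.Coe.ringHom))‖ ^ s ∂μ)
      = ∑' k, c k * (A k - A (k + 1)) := by
    have h6 : (∫ u in {u : Fin n → ℚ_[p] | ∀ j, ‖u j‖ ≤ 1},
        ‖MvPolynomial.eval u (f.map (PadicInt.Coe.ringHom))‖ ^ s ∂μ)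
        = ∫ u, (PadicAux.pB p n).indicator
            (fun u => ‖MvPolynomial.eval u (f.map PadicInt.Coe.ringHom)‖ ^ s) u ∂μ :=
      (integral_indicator hBmeas).symm
    rw [h6]
    have h7 : (fun u => (PadicAux.pB p n).indicator
        (fun u => ‖MvPolynomial.eval u (f.map PadicInt.Coe.ringHom)‖ ^ s) u)
        = fun u => ∑' k, G k u := funext key
    rw [h7, integral_tsum hmeasG hsum_lint]
    refine tsum_congr fun k => ?_
    rw [hG]
    simp only
    rw [integral_indicator_const (c k) (hmeasS k), smul_eq_mul, measureReal_def, hμS k, mul_comm]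
  -- series algebra
  set a : ℕ → ℝ := fun k => c k * A k with ha
  set b : ℕ → ℝ := fun k => c k * A (k + 1) with hb
  have hsa : Summable a := by
    refine Summable.of_nonneg_of_le (fun k => ?_) (fun k => ?_)
      (summable_geometric_of_lt_one hr0 hr1)
    · exact mul_nonneg (le_of_lt (hc_pos k)) (hA_nonneg k)
    · rw [ha]
      simp only
      rw [hc_geo k]
      calc ((p : ℝ) ^ (-s)) ^ k * A k ≤ ((p : ℝ) ^ (-s)) ^ k * 1 := by
            apply mul_le_mul_of_nonneg_left (hA_le_one k) (pow_nonneg hr0 k)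
        _ = ((p : ℝ) ^ (-s)) ^ k := mul_one _
  have hsb : Summable b := by
    refine Summable.of_nonneg_of_le (fun k => ?_) (fun k => ?_)
      (summable_geometric_of_lt_one hr0 hr1)
    · exact mul_nonneg (le_of_lt (hc_pos k)) (hA_nonneg (k + 1))
    · rw [hb]
      simp only
      rw [hc_geo k]
      calc ((p : ℝ) ^ (-s)) ^ k * A (k + 1) ≤ ((p : ℝ) ^ (-s)) ^ k * 1 := by
            apply mul_le_mul_of_nonneg_left (hA_le_one (k + 1)) (pow_nonneg hr0 k)
        _ = ((p : ℝ) ^ (-s)) ^ k := mul_one _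
  have hsa' : Summable fun k => a (k + 1) := (summable_nat_add_iff 1).2 hsa
  have hba : ∀ k, b k = (p : ℝ) ^ s * a (k + 1) := by
    intro k
    rw [hb, ha]
    simp only
    have h8 : (p : ℝ) ^ s * c (k + 1) = c k := by
      rw [hc]
      simp only
      rw [← Real.rpow_add hp0]
      congr 1
      push_cast
      ring
    rw [← h8]
    ring
  have ha0 : a 0 = 1 := by
    rw [ha]
    simp only
    rw [hA0, hc]
    simp only [Nat.cast_zero, neg_zero, zero_mul, Real.rpow_zero, mul_one]
  -- identify the tail with the series in the statement
  have hterm : ∀ k : ℕ, (Nzeros p n f (k + 1) : ℝ) * (p : ℝ) ^ (-((k : ℝ) + 1) * ((n : ℝ) + s))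
      = a (k + 1) := by
    intro k
    rw [ha]
    simp only
    rw [hAval (k + 1), hc]
    simp only
    have h9 : ((p : ℝ) ^ ((k + 1) * n : ℕ))⁻¹ = (p : ℝ) ^ (-(((k + 1) * n : ℕ) : ℝ)) := by
      rw [Real.rpow_neg (le_of_lt hp0), Real.rpow_natCast]
    rw [h9, mul_comm ((p : ℝ) ^ (-(((k + 1) : ℕ) : ℝ) * s)), mul_assoc,
      ← Real.rpow_add hp0]
    congr 1
    push_cast
    ring
  have hsum_stmt : Summable (fun k : ℕ =>
      (Nzeros p n f (k + 1) : ℝ) * (p : ℝ) ^ (-((k : ℝ) + 1) * ((n : ℝ) + s))) := by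
    refine hsa'.congr fun k => (hterm k).symm
  refine ⟨hsum_stmt, ?_⟩
  have htail : (∑' k : ℕ, (Nzeros p n f (k + 1) : ℝ) * (p : ℝ) ^ (-((k : ℝ) + 1) * ((n : ℝ) + s)))
      = ∑' k, a (k + 1) := tsum_congr hterm
  rw [hint, htail]
  have h10 : ∀ k, c k * (A k - A (k + 1)) = a k - b k := by
    intro k
    rw [ha, hb]
    simp only
    ring
  rw [tsum_congr h10, Summable.tsum_sub hsa hsb, Summable.tsum_eq_zero_add hsa, ha0,
    tsum_congr hba, tsum_mul_left]
  ring
end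

section
/- Let f be a polynomial in n variables with coefficients in ℤ_p. Then lim_{s → ∞} ∫_{ℤ_p^n} |f(u)|_p^s dμ(u) = (p^n - N_1(f)) / p^n, where N_1(f) is the number of points x ∈ (ℤ/pℤ)^n at which the reduction of f modulo p vanishes, and the limit is taken along real s → ∞. -/
open MeasureTheory Filter Pointwise
open scoped ENNReal

namespace Stmt5Aux

variable (p : ℕ) [Fact p.Prime]

theorem toZMod_cast (c : ZMod p) : PadicInt.toZMod (ZMod.cast c : ℤ_[p]) = c := by
  haveI : NeZero p := ⟨(Fact.out : p.Prime).ne_zero⟩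
  rw [← ZMod.natCast_val, map_natCast, ZMod.natCast_val, ZMod.cast_id]

theorem toZMod_eq_iff (z : ℤ_[p]) (c : ZMod p) :
    PadicInt.toZMod z = c ↔ ‖z - (ZMod.cast c : ℤ_[p])‖ < 1 := by
  have h1 : ∀ w : ℤ_[p], ‖w‖ < 1 ↔ w ∈ IsLocalRing.maximalIdeal ℤ_[p] := by
    intro w
    rw [PadicInt.maximalIdeal_eq_span_p, Ideal.mem_span_singleton,
      ← PadicInt.norm_lt_one_iff_dvd]
  rw [h1, ← PadicInt.ker_toZMod, RingHom.mem_ker, map_sub, sub_eq_zero, toZMod_cast]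

theorem eval_map' {σ R S : Type*} [CommSemiring R] [CommSemiring S] (ψ : R →+* S)
    (u : σ → R) (f : MvPolynomial σ R) :
    MvPolynomial.eval (fun j => ψ (u j)) (f.map ψ) = ψ (MvPolynomial.eval u f) := by
  rw [MvPolynomial.eval_map]
  have h := MvPolynomial.eval₂_comp_left ψ (RingHom.id R) u f
  rw [RingHom.comp_id] at h
  exact h.symm

variable (n : ℕ)

def S : Set (Fin n → ℚ_[p]) := {u | ∀ j, ‖u j‖ ≤ 1}

def B : Set (Fin n → ℚ_[p]) := {u | ∀ j, ‖u j‖ < 1}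

def C (r : Fin n → ZMod p) : Set (Fin n → ℚ_[p]) :=
  {u | ∀ j, ‖u j - ((ZMod.cast (r j) : ℤ_[p]) : ℚ_[p])‖ < 1}

theorem measurableSet_S : MeasurableSet (S p n) := by
  have : S p n = ⋂ j, {u : Fin n → ℚ_[p] | ‖u j‖ ≤ 1} := by
    ext u; simp [S, Set.mem_iInter]
  rw [this]
  exact MeasurableSet.iInter fun j =>
    measurableSet_le ((continuous_norm.comp (continuous_apply j)).measurable)
      measurable_const

theorem measurableSet_C (r : Fin n → ZMod p) : MeasurableSet (C p n r) := by
  have : C p n r = ⋂ j, {u : Fin n → ℚ_[p] |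
      ‖u j - ((ZMod.cast (r j) : ℤ_[p]) : ℚ_[p])‖ < 1} := by
    ext u; simp [C, Set.mem_iInter]
  rw [this]
  exact MeasurableSet.iInter fun j =>
    measurableSet_lt ((continuous_norm.comp
      ((continuous_apply j).sub continuous_const)).measurable) measurable_const

theorem C_subset_S (r : Fin n → ZMod p) : C p n r ⊆ S p n := by
  intro u hu j
  have h1 := hu j
  have h2 : ‖((ZMod.cast (r j) : ℤ_[p]) : ℚ_[p])‖ ≤ 1 := by
    rw [PadicInt.padic_norm_e_of_padicInt]; exact PadicInt.norm_le_one _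
  calc ‖u j‖ = ‖(u j - ((ZMod.cast (r j) : ℤ_[p]) : ℚ_[p]))
        + ((ZMod.cast (r j) : ℤ_[p]) : ℚ_[p])‖ := by ring_nf
    _ ≤ max ‖u j - ((ZMod.cast (r j) : ℤ_[p]) : ℚ_[p])‖
        ‖((ZMod.cast (r j) : ℤ_[p]) : ℚ_[p])‖ := Padic.nonarchimedean _ _
    _ ≤ 1 := max_le h1.le h2

theorem mem_C_iff (u : Fin n → ℚ_[p]) (hu : u ∈ S p n) (r : Fin n → ZMod p) :
    u ∈ C p n r ↔ ∀ j, PadicInt.toZMod (⟨u j, hu j⟩ : ℤ_[p]) = r j := by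
  unfold C
  simp only [Set.mem_setOf_eq]
  refine forall_congr' fun j => ?_
  refine Iff.trans ?_ (toZMod_eq_iff p _ _).symm
  constructor
  · intro h
    exact h
  · intro h
    exact h

theorem S_eq_iUnion : S p n = ⋃ r : Fin n → ZMod p, C p n r := by
  ext u
  constructor
  · intro hu
    exact Set.mem_iUnion.2 ⟨fun j => PadicInt.toZMod (⟨u j, hu j⟩ : ℤ_[p]),
      (mem_C_iff p n u hu _).2 fun j => rfl⟩
  · intro hu
    obtain ⟨r, hr⟩ := Set.mem_iUnion.1 hu
    exact C_subset_S p n r hr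

theorem C_disjoint : Pairwise (Function.onFun Disjoint (C p n)) := by
  intro r r' hne
  rw [Function.onFun, Set.disjoint_left]
  intro u hur hur'
  apply hne
  have hu := C_subset_S p n r hur
  funext j
  have h1 := (mem_C_iff p n u hu r).1 hur j
  have h2 := (mem_C_iff p n u hu r').1 hur' j
  rw [← h1, ← h2]

theorem measure_C (μ : Measure (Fin n → ℚ_[p])) [μ.IsAddHaarMeasure]
    (hμ : μ (S p n) = 1) (r : Fin n → ZMod p) :
    μ (C p n r) = ((p : ℝ≥0∞) ^ n)⁻¹ := by
  haveI : NeZero p := ⟨(Fact.out : p.Prime).ne_zero⟩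
  -- every coset is a translate of any other
  have key : ∀ r r' : Fin n → ZMod p, μ (C p n r) = μ (C p n r') := by
    intro r r'
    have : C p n r = (fun j => ((ZMod.cast (r j) : ℤ_[p]) : ℚ_[p])
        - ((ZMod.cast (r' j) : ℤ_[p]) : ℚ_[p])) +ᵥ C p n r' := by
      ext u
      rw [Set.mem_vadd_set_iff_neg_vadd_mem]
      unfold C
      simp only [Set.mem_setOf_eq, vadd_eq_add, Pi.add_apply, Pi.neg_apply]
      refine forall_congr' fun j => ?_
      constructor <;> intro h <;>
        · convert h using 2; ring
    rw [this, measure_vadd]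
  have hsum : μ (S p n) = ∑' r : Fin n → ZMod p, μ (C p n r) := by
    rw [S_eq_iUnion]
    exact measure_iUnion (C_disjoint p n) (measurableSet_C p n)
  have hconst : ∀ r' : Fin n → ZMod p, μ (C p n r') = μ (C p n r) := fun r' => key r' r
  rw [hμ] at hsum
  rw [tsum_congr hconst, tsum_fintype] at hsum
  simp only [Finset.sum_const, Finset.card_univ, nsmul_eq_mul] at hsum
  have hcard : ((Fintype.card (Fin n → ZMod p) : ℝ≥0∞)) = (p : ℝ≥0∞) ^ n := by
    rw [Fintype.card_fun, ZMod.card, Fintype.card_fin]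
    push_cast; ring
  rw [hcard] at hsum
  have hp0 : ((p : ℝ≥0∞) ^ n) ≠ 0 := by
    simp [pow_ne_zero, Nat.cast_ne_zero, (Fact.out : p.Prime).ne_zero]
  have hptop : ((p : ℝ≥0∞) ^ n) ≠ ⊤ := by
    simp [ENNReal.pow_ne_top, ENNReal.natCast_ne_top]
  calc μ (C p n r) = ((p : ℝ≥0∞) ^ n)⁻¹ * ((p : ℝ≥0∞) ^ n * μ (C p n r)) := by
        rw [← mul_assoc, ENNReal.inv_mul_cancel hp0 hptop, one_mul]
    _ = ((p : ℝ≥0∞) ^ n)⁻¹ := by rw [← hsum, mul_one]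


def liftS (u : Fin n → ℚ_[p]) (hu : u ∈ S p n) : Fin n → ℤ_[p] := fun j => ⟨u j, hu j⟩

variable (f : MvPolynomial (Fin n) ℤ_[p])

theorem norm_le_one_on_S (u : Fin n → ℚ_[p]) (hu : u ∈ S p n) :
    ‖MvPolynomial.eval u (f.map PadicInt.Coe.ringHom)‖ ≤ 1 := by
  have h1 := eval_map' PadicInt.Coe.ringHom (liftS p n u hu) f
  have h2 : (fun j => PadicInt.Coe.ringHom (liftS p n u hu j)) = u := rfl
  rw [h2] at h1
  rw [h1]
  exact PadicInt.norm_le_one _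

theorem norm_lt_iff (u : Fin n → ℚ_[p]) (hu : u ∈ S p n) :
    ‖MvPolynomial.eval u (f.map PadicInt.Coe.ringHom)‖ < 1 ↔
      MvPolynomial.eval (fun j => PadicInt.toZMod (liftS p n u hu j))
        (f.map PadicInt.toZMod) = 0 := by
  have h1 := eval_map' PadicInt.Coe.ringHom (liftS p n u hu) f
  have h2 : (fun j => PadicInt.Coe.ringHom (liftS p n u hu j)) = u := rfl
  rw [h2] at h1
  rw [h1, eval_map' (PadicInt.toZMod (p := p)) (liftS p n u hu) f]
  have h3 := toZMod_eq_iff p (MvPolynomial.eval (liftS p n u hu) f) 0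
  simp only [ZMod.cast_zero, sub_zero] at h3
  exact h3.symm

def Z : Set (Fin n → ℚ_[p]) :=
  S p n ∩ {u | ‖MvPolynomial.eval u (f.map PadicInt.Coe.ringHom)‖ < 1}

theorem Z_eq : Z p n f = ⋃ x : {x : Fin n → ZMod p //
    MvPolynomial.eval x (f.map PadicInt.toZMod) = 0}, C p n x.val := by
  ext u
  simp only [Z, Set.mem_inter_iff, Set.mem_setOf_eq, Set.mem_iUnion]
  constructor
  · rintro ⟨hu, hlt⟩
    exact ⟨⟨fun j => PadicInt.toZMod (liftS p n u hu j),
      (norm_lt_iff p n f u hu).1 hlt⟩, (mem_C_iff p n u hu _).2 fun j => rfl⟩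
  · rintro ⟨⟨r, hr⟩, hu⟩
    have hS := C_subset_S p n r hu
    refine ⟨hS, (norm_lt_iff p n f u hS).2 ?_⟩
    rw [show (fun j => PadicInt.toZMod (liftS p n u hS j)) = r from
      funext ((mem_C_iff p n u hS r).1 hu)]
    exact hr

theorem measurableSet_Z : MeasurableSet (Z p n f) := by
  rw [Z_eq]
  exact MeasurableSet.iUnion
    (fun x : {x : Fin n → ZMod p // MvPolynomial.eval x (f.map PadicInt.toZMod) = 0} =>
      measurableSet_C p n x.val)

set_option maxHeartbeats 2000000 in
theorem measure_Z (μ : Measure (Fin n → ℚ_[p])) [μ.IsAddHaarMeasure]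
    (hμ : μ (S p n) = 1) :
    μ (Z p n f) = (Nat.card {x : Fin n → ZMod p //
      MvPolynomial.eval x (f.map PadicInt.toZMod) = 0} : ℝ≥0∞) * ((p : ℝ≥0∞) ^ n)⁻¹ := by
  haveI : NeZero p := ⟨(Fact.out : p.Prime).ne_zero⟩
  haveI : Fintype {x : Fin n → ZMod p // MvPolynomial.eval x (f.map PadicInt.toZMod) = 0} :=
    Fintype.ofFinite _
  have hdisj : Pairwise (Function.onFun Disjoint
      (fun x : {x : Fin n → ZMod p // MvPolynomial.eval x (f.map PadicInt.toZMod) = 0} =>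
        C p n x.val)) :=
    fun a b hab => C_disjoint p n (Subtype.val_injective.ne hab)
  rw [Z_eq, measure_iUnion hdisj
    (fun x : {x : Fin n → ZMod p // MvPolynomial.eval x (f.map PadicInt.toZMod) = 0} =>
      measurableSet_C p n x.val)]
  rw [tsum_congr (fun x : {x : Fin n → ZMod p //
    MvPolynomial.eval x (f.map PadicInt.toZMod) = 0} => measure_C p n μ hμ x.val),
    tsum_fintype]
  simp only [Finset.sum_const, Finset.card_univ, nsmul_eq_mul, Nat.card_eq_fintype_card]

end Stmt5Aux

/-- For `f ∈ ℤ_p[X_1,…,X_n]`,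
`lim_{s → ∞} ∫_{ℤ_p^n} |f(u)|_p^s dμ(u) = (p^n - N_1(f)) / p^n`, where `N_1(f)` is the number
of zeros of the reduction of `f` modulo `p` in `(ℤ/pℤ)^n`, the limit is along real `s → ∞`,
and `μ` is the Haar measure on `ℚ_p^n` normalized by `μ(ℤ_p^n) = 1`. -/
theorem stmt5 (p : ℕ) [Fact p.Prime] (n : ℕ)
    (μ : Measure (Fin n → ℚ_[p])) [μ.IsAddHaarMeasure]
    (hμ : μ {u : Fin n → ℚ_[p] | ∀ j, ‖u j‖ ≤ 1} = 1)
    (f : MvPolynomial (Fin n) ℤ_[p]) :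
    Tendsto (fun s : ℝ =>
        ∫ u in {u : Fin n → ℚ_[p] | ∀ j, ‖u j‖ ≤ 1},
          ‖MvPolynomial.eval u (f.map (PadicInt.Coe.ringHom))‖ ^ s ∂μ)
      atTop
      (nhds (((p : ℝ) ^ n
          - (Nat.card {x : Fin n → ZMod p //
              MvPolynomial.eval x (f.map (PadicInt.toZMod)) = 0} : ℝ)) / (p : ℝ) ^ n)) := by
  classical
  haveI : NeZero p := ⟨(Fact.out : p.Prime).ne_zero⟩
  have hμS : μ (Stmt5Aux.S p n) = 1 := hμ
  set N : ℕ := Nat.card {x : Fin n → ZMod p //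
      MvPolynomial.eval x (f.map (PadicInt.toZMod)) = 0} with hNdef
  set Fn : (Fin n → ℚ_[p]) → ℝ :=
    fun u => ‖MvPolynomial.eval u (f.map (PadicInt.Coe.ringHom))‖ with hFdef
  have hFcont : Continuous Fn :=
    continuous_norm.comp (MvPolynomial.continuous_eval _)
  set E : Set (Fin n → ℚ_[p]) := {u | Fn u = 1} with hEdef
  have hE : MeasurableSet E := hFcont.measurable (measurableSet_singleton (1 : ℝ))
  have hSmeas : MeasurableSet (Stmt5Aux.S p n) := Stmt5Aux.measurableSet_S p n
  haveI : IsFiniteMeasure (μ.restrict (Stmt5Aux.S p n)) :=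
    ⟨by rw [Measure.restrict_apply_univ, hμS]; exact ENNReal.one_lt_top⟩
  have key : Tendsto (fun s : ℝ => ∫ u in Stmt5Aux.S p n, Fn u ^ s ∂μ) atTop
      (nhds (∫ u in Stmt5Aux.S p n, E.indicator (fun _ => (1 : ℝ)) u ∂μ)) := by
    apply tendsto_integral_filter_of_dominated_convergence (bound := fun _ => (1 : ℝ))
    · filter_upwards [eventually_ge_atTop (0 : ℝ)] with s hs
      exact ((Real.continuous_rpow_const hs).comp hFcont).aestronglyMeasurable
    · filter_upwards [eventually_ge_atTop (0 : ℝ)] with s hs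
      rw [ae_restrict_iff' hSmeas]
      filter_upwards with u hu
      rw [Real.norm_eq_abs, abs_of_nonneg (Real.rpow_nonneg (norm_nonneg _) s)]
      exact Real.rpow_le_one (norm_nonneg _) (Stmt5Aux.norm_le_one_on_S p n f u hu) hs
    · exact integrable_const 1
    · rw [ae_restrict_iff' hSmeas]
      filter_upwards with u hu
      rcases eq_or_lt_of_le (Stmt5Aux.norm_le_one_on_S p n f u hu) with heq | hlt
      · have hE1 : E.indicator (fun _ => (1 : ℝ)) u = 1 :=
          Set.indicator_of_mem heq (fun _ => (1 : ℝ))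
        rw [hE1]
        have hconst : (fun s : ℝ => Fn u ^ s) = fun _ => (1 : ℝ) := by
          funext s
          show ‖MvPolynomial.eval u (f.map (PadicInt.Coe.ringHom))‖ ^ s = 1
          rw [heq, Real.one_rpow]
        rw [hconst]
        exact tendsto_const_nhds
      · have hmem : u ∉ E := fun h => absurd (h : Fn u = 1) (ne_of_lt hlt)
        have hE0 : E.indicator (fun _ => (1 : ℝ)) u = 0 :=
          Set.indicator_of_notMem hmem _
        rw [hE0]
        exact tendsto_rpow_atTop_of_base_lt_one _
          (lt_of_lt_of_le (by norm_num) (norm_nonneg _)) hlt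
  have hZsub : Stmt5Aux.Z p n f ⊆ Stmt5Aux.S p n := Set.inter_subset_left
  have hμZ : μ (Stmt5Aux.Z p n f) = (N : ℝ≥0∞) * ((p : ℝ≥0∞) ^ n)⁻¹ :=
    Stmt5Aux.measure_Z p n f μ hμS
  have hμZtop : μ (Stmt5Aux.Z p n f) ≠ ⊤ :=
    ne_top_of_le_ne_top (by rw [hμS]; exact ENNReal.one_ne_top) (measure_mono hZsub)
  have hNle : (N : ℝ≥0∞) * ((p : ℝ≥0∞) ^ n)⁻¹ ≤ 1 := by
    rw [← hμZ, ← hμS]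
    exact measure_mono hZsub
  have hES : E ∩ Stmt5Aux.S p n = Stmt5Aux.S p n \ Stmt5Aux.Z p n f := by
    ext u
    simp only [Set.mem_inter_iff, Set.mem_diff, hEdef, Set.mem_setOf_eq,
      Stmt5Aux.Z, Set.mem_inter_iff, not_and]
    constructor
    · rintro ⟨h1, h2⟩
      refine ⟨h2, fun _ h3 => ?_⟩
      exact absurd h1 (ne_of_lt h3)
    · rintro ⟨h1, h2⟩
      refine ⟨?_, h1⟩
      rcases eq_or_lt_of_le (Stmt5Aux.norm_le_one_on_S p n f u h1) with heq | hlt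
      · exact heq
      · exact absurd hlt (h2 h1)
  have hμE : μ (E ∩ Stmt5Aux.S p n) = 1 - (N : ℝ≥0∞) * ((p : ℝ≥0∞) ^ n)⁻¹ := by
    rw [hES, measure_diff hZsub (Stmt5Aux.measurableSet_Z p n f).nullMeasurableSet hμZtop,
      hμS, hμZ]
  have hint : ∫ u in Stmt5Aux.S p n, E.indicator (fun _ => (1 : ℝ)) u ∂μ
      = ((p : ℝ) ^ n - (N : ℝ)) / (p : ℝ) ^ n := by
    have h1 : ∫ u in Stmt5Aux.S p n, E.indicator (fun _ => (1 : ℝ)) u ∂μ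
        = ((μ.restrict (Stmt5Aux.S p n)) E).toReal := by
      rw [← measureReal_def, ← integral_indicator_one (μ := μ.restrict (Stmt5Aux.S p n)) hE]
      rfl
    rw [h1, Measure.restrict_apply hE, hμE]
    rw [ENNReal.toReal_sub_of_le hNle ENNReal.one_ne_top]
    have hp0 : ((p : ℝ) ^ n) ≠ 0 := by
      exact pow_ne_zero n (Nat.cast_ne_zero.2 (Fact.out : p.Prime).ne_zero)
    have h2 : ((N : ℝ≥0∞) * ((p : ℝ≥0∞) ^ n)⁻¹).toReal = (N : ℝ) * ((p : ℝ) ^ n)⁻¹ := by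
      rw [ENNReal.toReal_mul, ENNReal.toReal_inv, ENNReal.toReal_pow, ENNReal.toReal_natCast,
        ENNReal.toReal_natCast]
    rw [h2, ENNReal.toReal_one, sub_div, div_self hp0, div_eq_mul_inv]
  rw [← hint]
  exact key
end

section
/- Let s > 0 be real and N ≥ 1, and let B_0(s, y) := p^s · B(s, p·y) - B(s, y). Then ∫_{ℤ_p^N} B_0(s, u) dμ(u) = (p^s - 1)·p^{-N} + (1 - p^{-N})·(p^s - b(s)), and this quantity is strictly positive. -/
set_option maxHeartbeats 1000000

open MeasureTheory
open scoped ENNReal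

/-- `B(s, y) = ∫_{ℤ_p^N} |1 + Σ_i λ_i y_i|_p^s dμ(λ)`. -/
noncomputable def Bfun (p N : ℕ) [Fact p.Prime] (μ : Measure (Fin N → ℚ_[p]))
    (s : ℝ) (y : Fin N → ℚ_[p]) : ℝ :=
  ∫ lam in {lam : Fin N → ℚ_[p] | ∀ i, ‖lam i‖ ≤ 1}, ‖1 + ∑ i, lam i * y i‖ ^ s ∂μ

/-- The cut-off function `B_0(s, y) := p^s · B(s, p·y) - B(s, y)`. -/
noncomputable def Bcut (p N : ℕ) [Fact p.Prime] (μ : Measure (Fin N → ℚ_[p]))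
    (s : ℝ) (y : Fin N → ℚ_[p]) : ℝ :=
  (p : ℝ) ^ s * Bfun p N μ s (fun i => (p : ℚ_[p]) * y i) - Bfun p N μ s y

namespace Stmt8Aux

open Set

variable {p : ℕ} [hp : Fact p.Prime] {N : ℕ}

/-- The unit polydisc `ℤ_p^N`. -/
def Sset (p N : ℕ) [Fact p.Prime] : Set (Fin N → ℚ_[p]) := {l | ∀ i, ‖l i‖ ≤ 1}

/-- The polydisc `(pℤ_p)^N`. -/
def Tset (p N : ℕ) [Fact p.Prime] : Set (Fin N → ℚ_[p]) := {l | ∀ i, ‖l i‖ ≤ (p : ℝ)⁻¹}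

lemma one_lt_pR : (1 : ℝ) < p := by exact_mod_cast hp.out.one_lt
lemma p_posR : (0 : ℝ) < p := lt_trans one_pos one_lt_pR
lemma pinv_lt_one : ((p : ℝ))⁻¹ < 1 := by
  rw [inv_lt_one_iff₀]; right; exact one_lt_pR
lemma pinv_pos : (0:ℝ) < (p : ℝ)⁻¹ := inv_pos.2 p_posR

lemma norm_sum_le_of_le {ι : Type*} (t : Finset ι) (f : ι → ℚ_[p]) {r : ℝ} (hr : 0 ≤ r)
    (h : ∀ i ∈ t, ‖f i‖ ≤ r) : ‖∑ i ∈ t, f i‖ ≤ r := by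
  classical
  induction t using Finset.induction_on with
  | empty => simpa using hr
  | @insert a tt hx ih =>
    rw [Finset.sum_insert hx]
    refine le_trans (Padic.nonarchimedean _ _) (max_le (h a (Finset.mem_insert_self a tt))
      (ih fun i hi => h i (Finset.mem_insert_of_mem hi)))

lemma norm_add_eq_one {A B : ℚ_[p]} (hA : ‖A‖ = 1) (hB : ‖B‖ < 1) : ‖A + B‖ = 1 := by
  refine le_antisymm (le_trans (Padic.nonarchimedean _ _) (max_le hA.le hB.le)) ?_
  have h1 : ‖A‖ ≤ max ‖A + B‖ ‖B‖ := by
    calc ‖A‖ = ‖A + B + (-B)‖ := by ring_nf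
    _ ≤ max ‖A + B‖ ‖-B‖ := Padic.nonarchimedean _ _
    _ = max ‖A + B‖ ‖B‖ := by rw [norm_neg]
  rcases max_cases ‖A + B‖ ‖B‖ with ⟨he, _⟩ | ⟨he, _⟩
  · rw [he] at h1; exact hA ▸ h1
  · rw [he] at h1; rw [hA] at h1; exact absurd (lt_of_le_of_lt h1 hB) (lt_irrefl _)

lemma norm_small_iff (x : ℚ_[p]) : ‖x‖ ≤ (p : ℝ)⁻¹ ↔ ‖x‖ < 1 := by
  have := Padic.norm_le_pow_iff_norm_lt_pow_add_one x (-1)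
  simpa using this

lemma norm_eq_one_of (x : ℚ_[p]) (h1 : ‖x‖ ≤ 1) (h2 : ¬ ‖x‖ ≤ (p : ℝ)⁻¹) : ‖x‖ = 1 := by
  rw [norm_small_iff] at h2
  exact le_antisymm h1 (not_lt.1 h2)

lemma measurableSet_S : MeasurableSet (Sset p N) := by
  have : Sset p N = ⋂ i, {l : Fin N → ℚ_[p] | ‖l i‖ ≤ 1} := by
    ext l; simp [Sset, Set.mem_iInter]
  rw [this]
  exact MeasurableSet.iInter fun i =>
    (isClosed_le ((continuous_apply i).norm) continuous_const).measurableSet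

lemma measurableSet_T : MeasurableSet (Tset p N) := by
  have : Tset p N = ⋂ i, {l : Fin N → ℚ_[p] | ‖l i‖ ≤ (p:ℝ)⁻¹} := by
    ext l; simp [Tset, Set.mem_iInter]
  rw [this]
  exact MeasurableSet.iInter fun i =>
    (isClosed_le ((continuous_apply i).norm) continuous_const).measurableSet

lemma Tset_subset_S : Tset p N ⊆ Sset p N :=
  fun l hl i => le_trans (hl i) (le_of_lt pinv_lt_one)

/-- representative of a residue class -/
noncomputable def rep (d : Fin N → ZMod p) : Fin N → ℚ_[p] := fun i => ((d i).val : ℚ_[p])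

/-- coset of `(pℤ_p)^N` -/
def coset (d : Fin N → ZMod p) : Set (Fin N → ℚ_[p]) :=
  (fun x => (fun i => x i - rep d i)) ⁻¹' (Tset p N)

lemma mem_coset {d : Fin N → ZMod p} {x : Fin N → ℚ_[p]} :
    x ∈ coset d ↔ ∀ i, ‖x i - rep d i‖ ≤ (p:ℝ)⁻¹ := Iff.rfl

lemma norm_rep_le (d : Fin N → ZMod p) (i : Fin N) : ‖rep d i‖ ≤ 1 := by
  have := Padic.norm_int_le_one (p := p) ((d i).val : ℤ)
  simpa [rep] using this

lemma coset_subset_S (d : Fin N → ZMod p) : coset d ⊆ Sset p N := by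
  intro x hx i
  have h1 : ‖x i - rep d i‖ ≤ 1 := le_trans (hx i) (le_of_lt pinv_lt_one)
  have : x i = (x i - rep d i) + rep d i := by ring
  rw [this]
  exact le_trans (Padic.nonarchimedean _ _) (max_le h1 (norm_rep_le d i))

lemma measurableSet_coset (d : Fin N → ZMod p) : MeasurableSet (coset d) := by
  apply MeasurableSet.preimage measurableSet_T
  exact measurable_pi_lambda _ fun i => ((measurable_pi_apply i).sub measurable_const)

lemma coset_eq_preimage (d : Fin N → ZMod p) :
    coset d = (fun x => (fun i => - rep d i + x i)) ⁻¹' (Tset p N) := by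
  ext x; constructor <;> intro h i
  · have := h i; simpa [sub_eq_neg_add] using this
  · have := h i; simpa [sub_eq_neg_add] using this

instance : NeZero p := ⟨hp.out.ne_zero⟩

lemma exists_coset (u : Fin N → ℚ_[p]) (hu : u ∈ Sset p N) :
    ∃ d : Fin N → ZMod p, u ∈ coset d := by
  refine ⟨fun i => PadicInt.toZMod (⟨u i, hu i⟩ : ℤ_[p]), fun i => ?_⟩
  set x : ℤ_[p] := ⟨u i, hu i⟩ with hx
  set d : ZMod p := PadicInt.toZMod x with hd
  have hspec : x - (ZMod.cast d : ℤ_[p]) ∈ IsLocalRing.maximalIdeal ℤ_[p] :=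
    PadicInt.toZMod_spec x
  rw [PadicInt.maximalIdeal_eq_span_p, Ideal.mem_span_singleton] at hspec
  have hlt : ‖x - (ZMod.cast d : ℤ_[p])‖ < 1 := (PadicInt.norm_lt_one_iff_dvd _).2 hspec
  have hle : ‖x - (ZMod.cast d : ℤ_[p])‖ ≤ (p:ℝ)⁻¹ := by
    have := (PadicInt.norm_le_pow_iff_norm_lt_pow_add_one (x - (ZMod.cast d : ℤ_[p])) (-1))
    simp only [neg_add_cancel, zpow_zero, zpow_neg_one] at this
    exact this.2 hlt
  have hcast : (ZMod.cast d : ℤ_[p]) = ((d.val : ℕ) : ℤ_[p]) := (ZMod.natCast_val d).symm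
  have heq : u i - rep (fun i => PadicInt.toZMod (⟨u i, hu i⟩ : ℤ_[p])) i
      = ((x - (ZMod.cast d : ℤ_[p]) : ℤ_[p]) : ℚ_[p]) := by
    rw [PadicInt.coe_sub, hcast, PadicInt.coe_natCast]
    rfl
  show ‖u i - rep (fun i => PadicInt.toZMod (⟨u i, hu i⟩ : ℤ_[p])) i‖ ≤ (p:ℝ)⁻¹
  rw [heq, ← PadicInt.norm_def]; exact hle

lemma coset_disjoint : Pairwise (Function.onFun Disjoint (coset (p := p) (N := N))) := by
  intro d d' hdd'
  rw [Function.onFun, Set.disjoint_left]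
  intro x hx hx'
  apply hdd'
  funext i
  have h1 := hx i
  have h2 := hx' i
  have hsub : ‖rep d' i - rep d i‖ < 1 := by
    have he : rep d' i - rep d i = (x i - rep d i) + -(x i - rep d' i) := by ring
    rw [he]
    refine lt_of_le_of_lt (le_trans (Padic.nonarchimedean _ _)
      (max_le ?_ ?_)) (pinv_lt_one (p := p))
    · exact h1
    · rw [norm_neg]; exact h2
  have hdvd : (p : ℤ) ∣ ((d' i).val : ℤ) - ((d i).val : ℤ) := by
    rw [← Padic.norm_intCast_lt_one_iff]
    have hz : ((((d' i).val : ℤ) - ((d i).val : ℤ) : ℤ) : ℚ_[p]) = rep d' i - rep d i := by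
      push_cast [rep]
      ring
    rw [hz]
    exact hsub
  have hmod : (d i).val ≡ (d' i).val [MOD p] := by
    rw [Nat.modEq_iff_dvd]
    exact hdvd
  have : (((d i).val : ℕ) : ZMod p) = (((d' i).val : ℕ) : ZMod p) :=
    (ZMod.natCast_eq_natCast_iff _ _ _).2 hmod
  rw [ZMod.natCast_val, ZMod.natCast_val, ZMod.cast_id, ZMod.cast_id] at this
  exact this

lemma S_eq_union : Sset p N = ⋃ d : Fin N → ZMod p, coset d := by
  ext u
  constructor
  · intro hu
    obtain ⟨d, hd⟩ := exists_coset u hu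
    exact Set.mem_iUnion.2 ⟨d, hd⟩
  · intro hu
    obtain ⟨d, hd⟩ := Set.mem_iUnion.1 hu
    exact coset_subset_S d hd

section Measure

variable (μ : Measure (Fin N → ℚ_[p])) [μ.IsAddHaarMeasure]

lemma measure_coset (d : Fin N → ZMod p) : μ (coset d) = μ (Tset p N) := by
  rw [coset_eq_preimage]
  exact measure_preimage_add μ _ _

lemma card_index : Fintype.card (Fin N → ZMod p) = p ^ N := by
  rw [Fintype.card_fun, ZMod.card, Fintype.card_fin]

variable (hμS : μ (Sset p N) = 1)

include hμS in
lemma measure_T : μ (Tset p N) = ((p : ℝ≥0∞) ^ N)⁻¹ := by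
  have h1 : μ (Sset p N) = ∑' d : Fin N → ZMod p, μ (coset d) := by
    rw [S_eq_union]
    exact measure_iUnion coset_disjoint measurableSet_coset
  rw [tsum_fintype] at h1
  simp only [measure_coset] at h1
  rw [Finset.sum_const, Finset.card_univ, card_index, hμS] at h1
  have hpn0 : ((p:ℝ≥0∞) ^ N) ≠ 0 := by
    apply pow_ne_zero
    exact_mod_cast Nat.cast_ne_zero.2 hp.out.ne_zero
  have hpnt : ((p:ℝ≥0∞) ^ N) ≠ ⊤ := ENNReal.pow_ne_top (ENNReal.natCast_ne_top p)
  have h2 : (p:ℝ≥0∞) ^ N * μ (Tset p N) = 1 := by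
    rw [← Nat.cast_pow, ← nsmul_eq_mul]
    exact h1.symm
  calc μ (Tset p N) = ((p:ℝ≥0∞) ^ N)⁻¹ * ((p:ℝ≥0∞) ^ N * μ (Tset p N)) := by
        rw [← mul_assoc, ENNReal.inv_mul_cancel hpn0 hpnt, one_mul]
    _ = ((p:ℝ≥0∞) ^ N)⁻¹ := by rw [h2, mul_one]

end Measure


/-- counting solutions of a linear equation over a finite field -/
lemma card_lin {F : Type*} [Field F] [Fintype F] [DecidableEq F] {n : ℕ} (v : Fin n → F)
    (j : Fin n) (hv : v j ≠ 0) (r : F) :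
    Fintype.card {d : Fin n → F // ∑ i, d i * v i = r} = Fintype.card F ^ (n - 1) := by
  classical
  set Φ : (Fin n → F) → (Fin n → F) := fun d => Function.update d j (∑ i, d i * v i) with hΦ
  have hΦinj : Function.Injective Φ := by
    intro d d' h
    have hne : ∀ i, i ≠ j → d i = d' i := by
      intro i hi
      have := congrFun h i
      simpa [Φ, Function.update_of_ne hi] using this
    have hsum : ∑ i, d i * v i = ∑ i, d' i * v i := by
      have := congrFun h j
      simpa [Φ] using this
    funext i
    by_cases hi : i = j
    · subst hi
      have h1 : ∑ k ∈ Finset.univ.erase i, d k * v k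
          = ∑ k ∈ Finset.univ.erase i, d' k * v k :=
        Finset.sum_congr rfl fun k hk => by rw [hne k (Finset.ne_of_mem_erase hk)]
      have h2 := hsum
      rw [← Finset.add_sum_erase _ _ (Finset.mem_univ i),
        ← Finset.add_sum_erase _ _ (Finset.mem_univ i), h1] at h2
      have h3 : d i * v i = d' i * v i := by
        have := add_right_cancel h2
        exact this
      exact mul_right_cancel₀ hv h3
    · exact hne i hi
  have hΦbij : Function.Bijective Φ := Finite.injective_iff_bijective.1 hΦinj
  let e := Equiv.ofBijective Φ hΦbij
  have key : ∀ d : Fin n → F, (∑ i, d i * v i = r) ↔ (e d) j = r := by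
    intro d
    simp [e, Equiv.ofBijective, Φ, Function.update_self]
  have step1 : Fintype.card {d : Fin n → F // ∑ i, d i * v i = r}
      = Fintype.card {x : Fin n → F // x j = r} := by
    apply Fintype.card_congr
    exact (Equiv.subtypeEquiv e (fun d => key d))
  rw [step1]
  have eq2 : {x : Fin n → F // x j = r} ≃ ({i : Fin n // i ≠ j} → F) :=
  { toFun := fun x i => x.1 i.1
    invFun := fun f => ⟨fun i => if h : i = j then r else f ⟨i, h⟩, by simp⟩
    left_inv := fun x => by
      apply Subtype.ext
      funext i
      by_cases h : i = j
      · subst h; simpa using x.2.symm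
      · simp [h]
    right_inv := fun f => by
      funext i
      simp [i.2] }
  rw [Fintype.card_congr eq2, Fintype.card_fun]
  congr 1
  have := Fintype.card_subtype_compl (fun i : Fin n => i = j)
  simp only [Fintype.card_subtype_eq, Fintype.card_fin] at this
  exact this

section Measure2

variable (μ : Measure (Fin N → ℚ_[p])) [μ.IsAddHaarMeasure]

/-- multiplication by `p` as a continuous linear equivalence -/
noncomputable def Lmap (p N : ℕ) [hp' : Fact p.Prime] :
    (Fin N → ℚ_[p]) ≃L[ℚ_[p]] (Fin N → ℚ_[p]) :=
  have hp0 : (p : ℚ_[p]) ≠ 0 := Nat.cast_ne_zero.2 hp'.out.ne_zero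
  { LinearEquiv.smulOfNeZero ℚ_[p] (Fin N → ℚ_[p]) (p : ℚ_[p]) hp0 with
    continuous_toFun := continuous_const_smul _
    continuous_invFun := continuous_const_smul _ }

lemma Lmap_apply (x : Fin N → ℚ_[p]) (i : Fin N) : Lmap p N x i = (p : ℚ_[p]) * x i := rfl

lemma Lmap_symm_apply (x : Fin N → ℚ_[p]) (i : Fin N) :
    (Lmap p N).symm x i = x i / (p : ℚ_[p]) := by
  have hp0 : (p : ℚ_[p]) ≠ 0 := Nat.cast_ne_zero.2 hp.out.ne_zero
  have h : x = Lmap p N ((Lmap p N).symm x) := ((Lmap p N).apply_symm_apply x).symm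
  have h2 : x i = (p : ℚ_[p]) * (Lmap p N).symm x i := by
    conv_lhs => rw [h]
    exact Lmap_apply _ _
  rw [h2, mul_div_cancel_left₀ _ hp0]

lemma Lmap_preimage_T : (⇑(Lmap p N)) ⁻¹' (Tset p N) = Sset p N := by
  ext x
  simp only [Set.mem_preimage, Tset, Sset, Set.mem_setOf_eq]
  have hkey : ∀ i, ‖Lmap p N x i‖ ≤ (p:ℝ)⁻¹ ↔ ‖x i‖ ≤ 1 := by
    intro i
    rw [Lmap_apply, norm_mul, Padic.norm_p]
    exact mul_le_iff_le_one_right (pinv_pos (p := p))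
  exact forall_congr' hkey

variable (hμS : μ (Sset p N) = 1)

include hμS in
lemma map_Lmap : μ.map (Lmap p N) = ((p : ℝ≥0∞) ^ N) • μ := by
  haveI := (Lmap p N).isAddHaarMeasure_map μ
  have h0 : μ.map (Lmap p N) = Measure.addHaarScalarFactor (μ.map (Lmap p N)) μ • μ :=
    Measure.isAddLeftInvariant_eq_smul _ _
  set c : NNReal := Measure.addHaarScalarFactor (μ.map (Lmap p N)) μ with hc
  have h1 : μ.map (Lmap p N) (Tset p N) = 1 := by
    rw [Measure.map_apply (Lmap p N).continuous.measurable measurableSet_T, Lmap_preimage_T, hμS]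
  have h2 : (c : ℝ≥0∞) * ((p : ℝ≥0∞) ^ N)⁻¹ = 1 := by
    have h3 := congrArg (fun m : Measure (Fin N → ℚ_[p]) => m (Tset p N)) h0
    simp only [Measure.smul_apply, smul_eq_mul, ENNReal.smul_def] at h3
    rw [← measure_T μ hμS, ← h3, h1]
  have hpn0 : ((p:ℝ≥0∞) ^ N) ≠ 0 := by
    apply pow_ne_zero
    exact_mod_cast Nat.cast_ne_zero.2 hp.out.ne_zero
  have hpnt : ((p:ℝ≥0∞) ^ N) ≠ ⊤ := ENNReal.pow_ne_top (ENNReal.natCast_ne_top p)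
  have hcval : (c : ℝ≥0∞) = (p : ℝ≥0∞) ^ N := by
    calc (c : ℝ≥0∞) = ((c : ℝ≥0∞) * ((p : ℝ≥0∞) ^ N)⁻¹) * (p : ℝ≥0∞) ^ N := by
          rw [mul_assoc, ENNReal.inv_mul_cancel hpn0 hpnt, mul_one]
      _ = (p : ℝ≥0∞) ^ N := by rw [h2, one_mul]
  rw [h0]
  ext A hA
  simp [ENNReal.smul_def, hcval]

include hμS in
lemma integral_T_scale (g : (Fin N → ℚ_[p]) → ℝ) (hg : Continuous g) :
    ∫ x in Tset p N, g ((Lmap p N).symm x) ∂μ = ((p:ℝ)^N)⁻¹ * ∫ x in Sset p N, g x ∂μ := by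
  set f : (Fin N → ℚ_[p]) → ℝ := Set.indicator (Tset p N) (fun x => g ((Lmap p N).symm x)) with hf
  have hmeas : AEStronglyMeasurable f (μ.map (Lmap p N)) :=
    ((hg.comp (Lmap p N).symm.continuous).stronglyMeasurable.indicator
      measurableSet_T).aestronglyMeasurable
  have h1 : ∫ x, f x ∂(μ.map (Lmap p N)) = ∫ x, f (Lmap p N x) ∂μ :=
    integral_map (Lmap p N).continuous.measurable.aemeasurable hmeas
  have h2 : (fun x => f (Lmap p N x)) = Set.indicator (Sset p N) g := by
    funext x
    by_cases hx : x ∈ Sset p N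
    · have hx' : Lmap p N x ∈ Tset p N := by
        rw [← Lmap_preimage_T (p := p) (N := N)] at hx; exact hx
      rw [hf]
      rw [Set.indicator_of_mem hx', Set.indicator_of_mem hx, (Lmap p N).symm_apply_apply]
    · have hx' : Lmap p N x ∉ Tset p N := by
        rw [← Lmap_preimage_T (p := p) (N := N)] at hx; exact hx
      rw [hf, Set.indicator_of_notMem hx', Set.indicator_of_notMem hx]
  rw [map_Lmap μ hμS, integral_smul_measure, h2] at h1
  rw [hf, integral_indicator measurableSet_T] at h1
  rw [integral_indicator measurableSet_S] at h1
  have htr : ((p:ℝ≥0∞)^N).toReal = (p:ℝ)^N := by simp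
  rw [htr] at h1
  have hpn : ((p:ℝ)^N) ≠ 0 := pow_ne_zero _ (ne_of_gt (p_posR (p := p)))
  rw [smul_eq_mul] at h1
  rw [← h1, ← mul_assoc, inv_mul_cancel₀ hpn, one_mul]

lemma setIntegral_add_left (c : Fin N → ℚ_[p]) (f : (Fin N → ℚ_[p]) → ℝ)
    (A : Set (Fin N → ℚ_[p])) :
    ∫ x in (fun x => c + x) ⁻¹' A, f (c + x) ∂μ = ∫ x in A, f x ∂μ :=
  (measurePreserving_add_left μ c).setIntegral_preimage_emb
    (Homeomorph.measurableEmbedding (Homeomorph.addLeft c)) f A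

/-- the function `a ↦ ∫_{S} ‖a + λ·y‖^s dλ` -/
noncomputable def Ffun (μ : Measure (Fin N → ℚ_[p])) (s : ℝ) (y : Fin N → ℚ_[p])
    (a : ℚ_[p]) : ℝ :=
  ∫ l in Sset p N, ‖a + ∑ i, l i * y i‖ ^ s ∂μ

lemma cont_integrand {s : ℝ} (hs : 0 < s) (y : Fin N → ℚ_[p]) (a : ℚ_[p]) :
    Continuous fun l : Fin N → ℚ_[p] => ‖a + ∑ i, l i * y i‖ ^ s := by
  apply Continuous.rpow_const
  · exact (continuous_const.add (continuous_finset_sum _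
      fun i _ => (continuous_apply i).mul continuous_const)).norm
  · intro x; right; exact hs.le

lemma norm_lin_le {y : Fin N → ℚ_[p]} (hy : ∀ i, ‖y i‖ ≤ 1) {l : Fin N → ℚ_[p]} {r : ℝ}
    (hr : 0 ≤ r) (hl : ∀ i, ‖l i‖ ≤ r) : ‖∑ i, l i * y i‖ ≤ r := by
  apply norm_sum_le_of_le _ _ hr
  intro i _
  calc ‖l i * y i‖ = ‖l i‖ * ‖y i‖ := norm_mul _ _
    _ ≤ r * 1 := mul_le_mul (hl i) (hy i) (norm_nonneg _) hr
    _ = r := mul_one r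

lemma integrand_le_one {s : ℝ} (hs : 0 < s) {y : Fin N → ℚ_[p]} (hy : ∀ i, ‖y i‖ ≤ 1)
    {a : ℚ_[p]} (ha : ‖a‖ ≤ 1) {l : Fin N → ℚ_[p]} (hl : l ∈ Sset p N) :
    ‖a + ∑ i, l i * y i‖ ^ s ≤ 1 := by
  apply Real.rpow_le_one (norm_nonneg _) _ hs.le
  exact le_trans (Padic.nonarchimedean _ _)
    (max_le ha (norm_lin_le hy zero_le_one hl))

include hμS in
lemma integrableOn_integrand {s : ℝ} (hs : 0 < s) {y : Fin N → ℚ_[p]} (hy : ∀ i, ‖y i‖ ≤ 1)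
    {a : ℚ_[p]} (ha : ‖a‖ ≤ 1) :
    IntegrableOn (fun l => ‖a + ∑ i, l i * y i‖ ^ s) (Sset p N) μ := by
  apply Measure.integrableOn_of_bounded (M := 1)
  · rw [hμS]; exact ENNReal.one_ne_top
  · exact (cont_integrand hs y a).aestronglyMeasurable
  · filter_upwards [ae_restrict_mem measurableSet_S] with l hl
    rw [Real.norm_of_nonneg (Real.rpow_nonneg (norm_nonneg _) _)]
    exact integrand_le_one hs hy ha hl

lemma Ffun_const {s : ℝ} (hs : 0 < s) {y : Fin N → ℚ_[p]} (hy : ∀ i, ‖y i‖ ≤ 1)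
    (j : Fin N) (hyj : ‖y j‖ = 1) {a a' : ℚ_[p]} (ha : ‖a‖ ≤ 1) (ha' : ‖a'‖ ≤ 1) :
    Ffun μ s y a = Ffun μ s y a' := by
  classical
  have hyj0 : y j ≠ 0 := by
    intro h; rw [h, norm_zero] at hyj; exact one_ne_zero hyj.symm
  set c : Fin N → ℚ_[p] := fun i => if i = j then (a' - a) / y j else 0 with hcdef
  have hcS : ∀ i, ‖c i‖ ≤ 1 := by
    intro i
    by_cases hi : i = j
    · simp only [hcdef, hi, if_pos rfl]
      rw [norm_div, hyj, div_one, sub_eq_add_neg]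
      refine le_trans (Padic.nonarchimedean _ _) (max_le ha' ?_)
      rw [norm_neg]; exact ha
    · simp [hcdef, hi]
  have hsum : ∀ x : Fin N → ℚ_[p], ∑ i, (c i + x i) * y i = (a' - a) + ∑ i, x i * y i := by
    intro x
    have h2 : ∑ i, c i * y i = a' - a := by
      rw [Finset.sum_eq_single j]
      · simp only [hcdef, if_pos rfl]
        exact div_mul_cancel₀ _ hyj0
      · intro b _ hb; simp [hcdef, hb]
      · intro h; exact absurd (Finset.mem_univ j) h
    calc ∑ i, (c i + x i) * y i = ∑ i, (c i * y i + x i * y i) := by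
          apply Finset.sum_congr rfl; intro i _; ring
      _ = (∑ i, c i * y i) + ∑ i, x i * y i := Finset.sum_add_distrib
      _ = (a' - a) + ∑ i, x i * y i := by rw [h2]
  have hpre : (fun x => c + x) ⁻¹' (Sset p N) = Sset p N := by
    ext x
    constructor
    · intro hx i
      have h1 : ‖c i + x i‖ ≤ 1 := hx i
      have he : x i = (c i + x i) + -(c i) := by ring
      rw [he]
      refine le_trans (Padic.nonarchimedean _ _) (max_le h1 ?_)
      rw [norm_neg]; exact hcS i
    · intro hx i
      exact le_trans (Padic.nonarchimedean _ _) (max_le (hcS i) (hx i))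
  have h0 := setIntegral_add_left μ c (fun l => ‖a + ∑ i, l i * y i‖ ^ s) (Sset p N)
  rw [hpre] at h0
  have h1 : ∫ x in Sset p N, ‖a + ∑ i, (c + x) i * y i‖ ^ s ∂μ
      = ∫ x in Sset p N, ‖a' + ∑ i, x i * y i‖ ^ s ∂μ := by
    apply setIntegral_congr_fun measurableSet_S
    intro x _
    simp only [Pi.add_apply]
    rw [hsum x]
    have : a + (a' - a + ∑ i, x i * y i) = a' + ∑ i, x i * y i := by ring
    rw [this]
  unfold Ffun
  rw [← h0, h1]

end Measure2


section Recursion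

variable (μ : Measure (Fin N → ℚ_[p])) [μ.IsAddHaarMeasure]

lemma bad_iff {y : Fin N → ℚ_[p]} (hy : ∀ i, ‖y i‖ ≤ 1) (d : Fin N → ZMod p) :
    ‖(1:ℚ_[p]) + ∑ i, rep d i * y i‖ ≤ (p:ℝ)⁻¹
      ↔ ∑ i, d i * PadicInt.toZMod (⟨y i, hy i⟩ : ℤ_[p]) = -1 := by
  set z : ℤ_[p] := 1 + ∑ i, (((d i).val : ℕ) : ℤ_[p]) * ⟨y i, hy i⟩ with hzdef
  have hz : ((z : ℤ_[p]) : ℚ_[p]) = 1 + ∑ i, rep d i * y i := by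
    show (PadicInt.Coe.ringHom z) = 1 + ∑ i, rep d i * y i
    rw [hzdef, map_add, map_one, map_sum]
    congr 1
  have h1 : ‖(1:ℚ_[p]) + ∑ i, rep d i * y i‖ ≤ (p:ℝ)⁻¹ ↔ ‖z‖ ≤ (p:ℝ)⁻¹ := by
    rw [PadicInt.norm_def, hz]
  have h2 : ‖z‖ ≤ (p:ℝ)⁻¹ ↔ ‖z‖ < 1 := by
    have := PadicInt.norm_le_pow_iff_norm_lt_pow_add_one z (-1)
    simpa using this
  have h3 : ‖z‖ < 1 ↔ (p:ℤ_[p]) ∣ z := PadicInt.norm_lt_one_iff_dvd z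
  have h4 : (p:ℤ_[p]) ∣ z ↔ PadicInt.toZMod z = 0 := by
    rw [← Ideal.mem_span_singleton, ← PadicInt.maximalIdeal_eq_span_p,
      ← PadicInt.ker_toZMod, RingHom.mem_ker]
  have h5 : PadicInt.toZMod z = 1 + ∑ i, d i * PadicInt.toZMod (⟨y i, hy i⟩ : ℤ_[p]) := by
    rw [hzdef, map_add, map_one, map_sum]
    congr 1
    apply Finset.sum_congr rfl
    intro i _
    exact (map_mul PadicInt.toZMod (((d i).val : ℕ) : ℤ_[p]) (⟨y i, hy i⟩ : ℤ_[p])).trans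
      (by rw [map_natCast, ZMod.natCast_val, ZMod.cast_id])
  rw [h1, h2, h3, h4, h5]
  constructor
  · intro h
    exact eq_neg_of_add_eq_zero_right h
  · intro h
    rw [h]
    exact add_neg_cancel 1

variable (hμS : μ (Sset p N) = 1)

include hμS in
lemma Ffun_recursion {s : ℝ} (hs : 0 < s) {y : Fin N → ℚ_[p]} (hy : ∀ i, ‖y i‖ ≤ 1)
    (hN : 1 ≤ N) (j : Fin N) (hyj : ‖y j‖ = 1) :
    Ffun μ s y 1 = (1 - (p:ℝ)⁻¹) + ((p:ℝ)⁻¹) ^ s * (p:ℝ)⁻¹ * Ffun μ s y 1 := by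
  classical
  have hp0R : (0:ℝ) < p := p_posR (p := p)
  set β : ℝ := ((p:ℝ)⁻¹) ^ s with hβ
  have hInt : IntegrableOn (fun l => ‖(1:ℚ_[p]) + ∑ i, l i * y i‖ ^ s) (Sset p N) μ :=
    integrableOn_integrand μ hμS hs hy (by rw [norm_one])
  have hdecomp : Ffun μ s y 1
      = ∑ d : Fin N → ZMod p, ∫ l in coset d, ‖(1:ℚ_[p]) + ∑ i, l i * y i‖ ^ s ∂μ := by
    unfold Ffun
    rw [show Sset p N = ⋃ d : Fin N → ZMod p, coset d from S_eq_union]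
    rw [integral_iUnion measurableSet_coset coset_disjoint (by rw [← S_eq_union]; exact hInt)]
    exact tsum_fintype _
  have hcoset : ∀ d : Fin N → ZMod p,
      ∫ l in coset d, ‖(1:ℚ_[p]) + ∑ i, l i * y i‖ ^ s ∂μ
      = if ‖(1:ℚ_[p]) + ∑ i, rep d i * y i‖ ≤ (p:ℝ)⁻¹ then β * (((p:ℝ)^N)⁻¹ * Ffun μ s y 1)
        else ((p:ℝ)^N)⁻¹ := by
    intro d
    have hpre : (fun x => rep d + x) ⁻¹' coset d = Tset p N := by
      ext x
      simp only [Set.mem_preimage, mem_coset, Tset, Set.mem_setOf_eq, Pi.add_apply]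
      constructor <;> intro h i
      · have := h i; rwa [add_sub_cancel_left] at this
      · rw [add_sub_cancel_left]; exact h i
    have h0 := setIntegral_add_left μ (rep d) (fun l => ‖(1:ℚ_[p]) + ∑ i, l i * y i‖ ^ s)
      (coset d)
    rw [hpre] at h0
    rw [← h0]
    have hAd : ∀ x : Fin N → ℚ_[p],
        (1:ℚ_[p]) + ∑ i, (rep d + x) i * y i
        = ((1:ℚ_[p]) + ∑ i, rep d i * y i) + ∑ i, x i * y i := by
      intro x
      simp only [Pi.add_apply]
      have : ∑ i, (rep d i + x i) * y i = (∑ i, rep d i * y i) + ∑ i, x i * y i := by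
        rw [← Finset.sum_add_distrib]
        apply Finset.sum_congr rfl
        intro i _
        ring
      rw [this, add_assoc]
    set A : ℚ_[p] := (1:ℚ_[p]) + ∑ i, rep d i * y i with hA
    have hAle : ‖A‖ ≤ 1 := le_trans (Padic.nonarchimedean _ _)
      (max_le (le_of_eq norm_one) (norm_lin_le hy zero_le_one (norm_rep_le d)))
    by_cases hbad : ‖A‖ ≤ (p:ℝ)⁻¹
    · rw [if_pos hbad]
      have hp0 : (p:ℚ_[p]) ≠ 0 := Nat.cast_ne_zero.2 hp.out.ne_zero
      set a0 : ℚ_[p] := A / (p:ℚ_[p]) with ha0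
      have ha0le : ‖a0‖ ≤ 1 := by
        rw [ha0, norm_div, Padic.norm_p]
        have hdiv : ‖A‖ / ((p:ℝ))⁻¹ = ‖A‖ * p := by field_simp
        rw [hdiv]
        calc ‖A‖ * p ≤ (p:ℝ)⁻¹ * p := mul_le_mul_of_nonneg_right hbad (le_of_lt hp0R)
          _ = 1 := inv_mul_cancel₀ (ne_of_gt hp0R)
      have hfac : ∀ x : Fin N → ℚ_[p],
          ‖A + ∑ i, x i * y i‖ ^ s = β * ‖a0 + ∑ i, (Lmap p N).symm x i * y i‖ ^ s := by
        intro x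
        have h2 : ∑ i, (Lmap p N).symm x i * y i = ∑ i, (x i / (p:ℚ_[p])) * y i := by
          apply Finset.sum_congr rfl
          intro i _
          rw [Lmap_symm_apply]
        have h1 : A + ∑ i, x i * y i = (p:ℚ_[p]) * (a0 + ∑ i, (x i / (p:ℚ_[p])) * y i) := by
          rw [ha0, mul_add, mul_div_cancel₀ _ hp0, Finset.mul_sum]
          congr 1
          apply Finset.sum_congr rfl
          intro i _
          rw [← mul_assoc, mul_div_cancel₀ _ hp0]
        rw [h2, h1, norm_mul, Padic.norm_p,
          Real.mul_rpow (inv_nonneg.2 (le_of_lt hp0R)) (norm_nonneg _), hβ]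
      calc ∫ x in Tset p N, ‖(1:ℚ_[p]) + ∑ i, (rep d + x) i * y i‖ ^ s ∂μ
          = ∫ x in Tset p N, β * ‖a0 + ∑ i, (Lmap p N).symm x i * y i‖ ^ s ∂μ := by
            apply setIntegral_congr_fun measurableSet_T
            intro x _
            beta_reduce
            rw [hAd x]
            exact hfac x
        _ = β * ∫ x in Tset p N, ‖a0 + ∑ i, (Lmap p N).symm x i * y i‖ ^ s ∂μ :=
            MeasureTheory.integral_const_mul β _
        _ = β * (((p:ℝ)^N)⁻¹ * ∫ v in Sset p N, ‖a0 + ∑ i, v i * y i‖ ^ s ∂μ) := by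
            rw [integral_T_scale μ hμS _ (cont_integrand hs y a0)]
        _ = β * (((p:ℝ)^N)⁻¹ * Ffun μ s y 1) := by
            rw [show (∫ v in Sset p N, ‖a0 + ∑ i, v i * y i‖ ^ s ∂μ) = Ffun μ s y a0 from rfl]
            rw [Ffun_const μ hs hy j hyj ha0le (le_of_eq norm_one)]
    · rw [if_neg hbad]
      have hA1 : ‖A‖ = 1 := norm_eq_one_of _ hAle hbad
      calc ∫ x in Tset p N, ‖(1:ℚ_[p]) + ∑ i, (rep d + x) i * y i‖ ^ s ∂μ
          = ∫ x in Tset p N, (1:ℝ) ∂μ := by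
            apply setIntegral_congr_fun measurableSet_T
            intro x hx
            beta_reduce
            rw [hAd x,
              norm_add_eq_one hA1 (lt_of_le_of_lt (norm_lin_le hy (le_of_lt (pinv_pos (p := p))) hx)
                (pinv_lt_one (p := p)))]
            exact Real.one_rpow s
        _ = ((p:ℝ)^N)⁻¹ := by
            rw [setIntegral_const, measureReal_def, measure_T μ hμS, smul_eq_mul, mul_one]
            simp
  have hybar0 : PadicInt.toZMod (⟨y j, hy j⟩ : ℤ_[p]) ≠ 0 := by
    intro h0
    set w : ℤ_[p] := (⟨y j, hy j⟩ : ℤ_[p]) with hw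
    have h4 : (p:ℤ_[p]) ∣ w := by
      rw [← Ideal.mem_span_singleton, ← PadicInt.maximalIdeal_eq_span_p,
        ← PadicInt.ker_toZMod, RingHom.mem_ker]
      exact h0
    have h5 : ‖w‖ < 1 := (PadicInt.norm_lt_one_iff_dvd w).2 h4
    have h5' : ‖y j‖ < 1 := h5
    rw [hyj] at h5'
    exact lt_irrefl _ h5'
  have hcard1 : (Finset.univ.filter
      (fun d : Fin N → ZMod p => ‖(1:ℚ_[p]) + ∑ i, rep d i * y i‖ ≤ (p:ℝ)⁻¹)).card
      = p ^ (N-1) := by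
    rw [← Fintype.card_subtype]
    have e1 : {d : Fin N → ZMod p // ‖(1:ℚ_[p]) + ∑ i, rep d i * y i‖ ≤ (p:ℝ)⁻¹}
        ≃ {d : Fin N → ZMod p // ∑ i, d i * PadicInt.toZMod (⟨y i, hy i⟩ : ℤ_[p]) = -1} :=
      Equiv.subtypeEquivRight (fun d => bad_iff hy d)
    rw [Fintype.card_congr e1, card_lin _ j hybar0 (-1), ZMod.card]
  have hcard2 : (Finset.univ.filter
      (fun d : Fin N → ZMod p => ¬ ‖(1:ℚ_[p]) + ∑ i, rep d i * y i‖ ≤ (p:ℝ)⁻¹)).card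
      = p ^ N - p ^ (N-1) := by
    have htot := Finset.card_filter_add_card_filter_not (s := Finset.univ)
      (p := fun d : Fin N → ZMod p => ‖(1:ℚ_[p]) + ∑ i, rep d i * y i‖ ≤ (p:ℝ)⁻¹)
    rw [Finset.card_univ, card_index, hcard1] at htot
    omega
  have hchain : Ffun μ s y 1
      = (p ^ (N-1) : ℕ) • (β * (((p:ℝ)^N)⁻¹ * Ffun μ s y 1))
        + ((p ^ N - p ^ (N-1) : ℕ)) • ((p:ℝ)^N)⁻¹ := by
    calc Ffun μ s y 1
        = ∑ d : Fin N → ZMod p, ∫ l in coset d, ‖(1:ℚ_[p]) + ∑ i, l i * y i‖ ^ s ∂μ := hdecomp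
      _ = ∑ d : Fin N → ZMod p,
            (if ‖(1:ℚ_[p]) + ∑ i, rep d i * y i‖ ≤ (p:ℝ)⁻¹
              then β * (((p:ℝ)^N)⁻¹ * Ffun μ s y 1) else ((p:ℝ)^N)⁻¹) :=
          Finset.sum_congr rfl (fun d _ => hcoset d)
      _ = _ := by
          rw [Finset.sum_ite, Finset.sum_const, Finset.sum_const, hcard1, hcard2]
  -- final arithmetic
  have hP0 : (p:ℝ) ≠ 0 := ne_of_gt hp0R
  have hPN : (p:ℝ)^N = (p:ℝ)^(N-1) * (p:ℝ) := by
    conv_lhs => rw [show N = (N-1)+1 by omega]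
    rw [pow_succ]
  have hPn1 : ((p:ℝ)^(N-1)) ≠ 0 := pow_ne_zero _ hP0
  have hcastsub : ((p ^ N - p ^ (N-1) : ℕ) : ℝ) = (p:ℝ)^N - (p:ℝ)^(N-1) := by
    rw [Nat.cast_sub (Nat.pow_le_pow_right hp.out.pos (Nat.sub_le N 1))]
    push_cast
    ring
  rw [nsmul_eq_mul, nsmul_eq_mul, hcastsub] at hchain
  have e1 : ((p ^ (N-1) : ℕ) : ℝ) * (β * (((p:ℝ)^N)⁻¹ * Ffun μ s y 1))
      = β * (p:ℝ)⁻¹ * Ffun μ s y 1 := by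
    push_cast
    rw [hPN]
    field_simp
  have e2 : ((p:ℝ)^N - (p:ℝ)^(N-1)) * ((p:ℝ)^N)⁻¹ = 1 - (p:ℝ)⁻¹ := by
    rw [hPN]
    field_simp
  rw [e1, e2] at hchain
  linarith [hchain]

end Recursion


section Final

variable (μ : Measure (Fin N → ℚ_[p])) [μ.IsAddHaarMeasure]
variable (hμS : μ (Sset p N) = 1)

include hμS in
lemma Bfun_small {s : ℝ} (hs : 0 < s) {y : Fin N → ℚ_[p]} (hy : ∀ i, ‖y i‖ ≤ (p:ℝ)⁻¹) :
    Bfun p N μ s y = 1 := by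
  have h1 : Bfun p N μ s y = ∫ l in Sset p N, ‖(1:ℚ_[p]) + ∑ i, l i * y i‖ ^ s ∂μ := rfl
  rw [h1]
  have h2 : ∫ l in Sset p N, ‖(1:ℚ_[p]) + ∑ i, l i * y i‖ ^ s ∂μ
      = ∫ l in Sset p N, (1:ℝ) ∂μ := by
    apply setIntegral_congr_fun measurableSet_S
    intro l hl
    beta_reduce
    have hsum : ‖∑ i, l i * y i‖ < 1 := by
      refine lt_of_le_of_lt (norm_sum_le_of_le _ _ (le_of_lt (pinv_pos (p := p)))
        fun i _ => ?_) (pinv_lt_one (p := p))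
      calc ‖l i * y i‖ = ‖l i‖ * ‖y i‖ := norm_mul _ _
        _ ≤ 1 * (p:ℝ)⁻¹ := mul_le_mul (hl i) (hy i) (norm_nonneg _) zero_le_one
        _ = (p:ℝ)⁻¹ := one_mul _
    rw [norm_add_eq_one norm_one hsum]
    exact Real.one_rpow s
  rw [h2, setIntegral_const, measureReal_def, hμS]
  simp

include hμS in
lemma Bfun_unit {s : ℝ} (hs : 0 < s) (hN : 1 ≤ N) {y : Fin N → ℚ_[p]}
    (hy : ∀ i, ‖y i‖ ≤ 1) (j : Fin N) (hyj : ‖y j‖ = 1) :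
    Bfun p N μ s y = (1 - (p:ℝ)⁻¹) / (1 - (p:ℝ) ^ (-(s+1))) := by
  have hp0 : (0:ℝ) < p := p_posR (p := p)
  have hp1 : (1:ℝ) < p := one_lt_pR (p := p)
  have hB : Bfun p N μ s y = Ffun μ s y 1 := rfl
  have hrec := Ffun_recursion μ hμS hs hy hN j hyj
  have hexp : ((p:ℝ)⁻¹) ^ s * (p:ℝ)⁻¹ = (p:ℝ) ^ (-(s+1)) := by
    have e1 : ((p:ℝ)⁻¹) ^ s = (p:ℝ) ^ (-s) := by
      rw [Real.inv_rpow hp0.le, Real.rpow_neg hp0.le]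
    have e2 : (p:ℝ)⁻¹ = (p:ℝ) ^ (-1:ℝ) := (Real.rpow_neg_one _).symm
    rw [e1, e2, ← Real.rpow_add hp0]
    ring_nf
  have hden : 0 < 1 - (p:ℝ) ^ (-(s+1)) := by
    have : (p:ℝ) ^ (-(s+1)) < 1 := Real.rpow_lt_one_of_one_lt_of_neg hp1 (by linarith)
    linarith
  rw [hB]
  have h' : Ffun μ s y 1 = (1 - (p:ℝ)⁻¹) + (p:ℝ) ^ (-(s+1)) * Ffun μ s y 1 := by
    rw [← hexp]
    exact hrec
  rw [eq_div_iff (ne_of_gt hden)]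
  ring_nf
  ring_nf at h'
  linarith [h']

end Final

end Stmt8Aux

open Stmt8Aux in
/-- For real `s > 0` and `N ≥ 1`,
`∫_{ℤ_p^N} B_0(s, u) dμ(u) = (p^s - 1)·p^{-N} + (1 - p^{-N})·(p^s - b(s))`, and this quantity is
strictly positive. Here `b(s) = (1 - p⁻¹)/(1 - p^{-(s+1)})` and `μ` is the Haar measure on
`ℚ_p^N` with `μ(ℤ_p^N) = 1`. -/
theorem stmt8 (p : ℕ) [Fact p.Prime] (N : ℕ) (hN : 1 ≤ N)
    (μ : Measure (Fin N → ℚ_[p])) [μ.IsAddHaarMeasure]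
    (hμ : μ {lam : Fin N → ℚ_[p] | ∀ i, ‖lam i‖ ≤ 1} = 1)
    (s : ℝ) (hs : 0 < s) :
    (∫ u in {u : Fin N → ℚ_[p] | ∀ i, ‖u i‖ ≤ 1}, Bcut p N μ s u ∂μ)
      = ((p : ℝ) ^ s - 1) * ((p : ℝ) ^ N)⁻¹
        + (1 - ((p : ℝ) ^ N)⁻¹)
          * ((p : ℝ) ^ s - (1 - (p : ℝ)⁻¹) / (1 - (p : ℝ) ^ (-(s + 1)))) ∧
    0 < ((p : ℝ) ^ s - 1) * ((p : ℝ) ^ N)⁻¹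
        + (1 - ((p : ℝ) ^ N)⁻¹)
          * ((p : ℝ) ^ s - (1 - (p : ℝ)⁻¹) / (1 - (p : ℝ) ^ (-(s + 1)))) := by
  classical
  have hp1 : (1:ℝ) < p := one_lt_pR (p := p)
  have hp0 : (0:ℝ) < p := p_posR (p := p)
  have hμS : μ (Sset p N) = 1 := hμ
  set b : ℝ := (1 - (p:ℝ)⁻¹) / (1 - (p:ℝ) ^ (-(s + 1))) with hb
  -- basic inequalities
  have hps : 1 < (p:ℝ) ^ s := by
    have := Real.rpow_lt_rpow_of_exponent_lt hp1 hs
    rwa [Real.rpow_zero] at this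
  have hden : 0 < 1 - (p:ℝ) ^ (-(s+1)) := by
    have : (p:ℝ) ^ (-(s+1)) < 1 := Real.rpow_lt_one_of_one_lt_of_neg hp1 (by linarith)
    linarith
  have hblt : b < 1 := by
    rw [hb, div_lt_one hden]
    have : (p:ℝ) ^ (-(s+1)) < (p:ℝ)⁻¹ := by
      rw [← Real.rpow_neg_one (p:ℝ)]
      exact Real.rpow_lt_rpow_of_exponent_lt hp1 (by linarith)
    linarith
  have hPNpos : (0:ℝ) < (p:ℝ)^N := pow_pos hp0 N
  have hPNinvle : ((p:ℝ)^N)⁻¹ ≤ 1 := by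
    rw [inv_le_one_iff₀]
    right
    exact one_le_pow₀ hp1.le
  -- measure facts
  have hT := measure_T μ hμS
  have hTS : Tset p N ⊆ Sset p N := Tset_subset_S
  have hpn0 : ((p:ℝ≥0∞) ^ N) ≠ 0 := by
    apply pow_ne_zero
    exact_mod_cast Nat.cast_ne_zero.2 (Fact.out (p := p.Prime)).ne_zero
  have hpnt : ((p:ℝ≥0∞) ^ N) ≠ ⊤ := ENNReal.pow_ne_top (ENNReal.natCast_ne_top p)
  have hTne : μ (Tset p N) ≠ ⊤ := by
    rw [hT]
    exact ENNReal.inv_ne_top.2 hpn0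
  have hSdiff : μ (Sset p N \ Tset p N) = 1 - ((p:ℝ≥0∞)^N)⁻¹ := by
    rw [measure_diff hTS (measurableSet_T).nullMeasurableSet hTne, hμS, hT]
  have hDne : μ (Sset p N \ Tset p N) ≠ ⊤ := by
    rw [hSdiff]
    exact ne_top_of_le_ne_top ENNReal.one_ne_top tsub_le_self
  have hTr : (μ (Tset p N)).toReal = ((p:ℝ)^N)⁻¹ := by
    rw [hT]
    simp
  have hDr : (μ (Sset p N \ Tset p N)).toReal = 1 - ((p:ℝ)^N)⁻¹ := by
    rw [hSdiff, ENNReal.toReal_sub_of_le _ ENNReal.one_ne_top]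
    · simp
    · rw [ENNReal.inv_le_one]
      calc (1:ℝ≥0∞) = 1^N := (one_pow N).symm
        _ ≤ (p:ℝ≥0∞)^N := by
            gcongr
            exact_mod_cast Nat.one_le_cast.2 (Fact.out (p := p.Prime)).one_lt.le
  -- pointwise description of Bcut on S
  set g : (Fin N → ℚ_[p]) → ℝ :=
    fun u => if u ∈ Tset p N then (p:ℝ)^s - 1 else (p:ℝ)^s - b with hg
  have hBcut : ∀ u ∈ Sset p N, Bcut p N μ s u = g u := by
    intro u hu
    have h1 : Bfun p N μ s (fun i => (p:ℚ_[p]) * u i) = 1 := by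
      apply Bfun_small μ hμS hs
      intro i
      rw [norm_mul, Padic.norm_p]
      calc ((p:ℝ))⁻¹ * ‖u i‖ ≤ (p:ℝ)⁻¹ * 1 :=
            mul_le_mul_of_nonneg_left (hu i) (inv_nonneg.2 hp0.le)
        _ = (p:ℝ)⁻¹ := mul_one _
    have hBc : Bcut p N μ s u
        = (p:ℝ)^s * Bfun p N μ s (fun i => (p:ℚ_[p]) * u i) - Bfun p N μ s u := rfl
    by_cases huT : u ∈ Tset p N
    · rw [hg]
      simp only [if_pos huT]
      rw [hBc, h1, Bfun_small μ hμS hs huT, mul_one]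
    · rw [hg]
      simp only [if_neg huT]
      have hex : ∃ j, ¬ ‖u j‖ ≤ (p:ℝ)⁻¹ := by
        by_contra h
        push_neg at h
        exact huT (fun i => h i)
      obtain ⟨j, hj⟩ := hex
      have hj1 : ‖u j‖ = 1 := norm_eq_one_of _ (hu j) hj
      rw [hBc, h1, mul_one, Bfun_unit μ hμS hs hN hu j hj1, hb]
  -- integrability of g on pieces
  have hgm : Measurable g := by
    rw [hg]
    exact Measurable.ite measurableSet_T measurable_const measurable_const
  set M : ℝ := max ‖(p:ℝ)^s - 1‖ ‖(p:ℝ)^s - b‖ with hM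
  have hgbd : ∀ x, ‖g x‖ ≤ M := by
    intro x
    rw [hg]
    by_cases hx : x ∈ Tset p N
    · simp only [if_pos hx]
      exact le_max_left _ _
    · simp only [if_neg hx]
      exact le_max_right _ _
  have hIT : IntegrableOn g (Tset p N) μ := by
    apply Measure.integrableOn_of_bounded hTne hgm.aestronglyMeasurable (M := M)
    filter_upwards [] with x
    exact hgbd x
  have hID : IntegrableOn g (Sset p N \ Tset p N) μ := by
    apply Measure.integrableOn_of_bounded hDne hgm.aestronglyMeasurable (M := M)
    filter_upwards [] with x
    exact hgbd x
  -- integral computation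
  have hmain : (∫ u in Sset p N, Bcut p N μ s u ∂μ)
      = ((p:ℝ)^s - 1) * ((p:ℝ)^N)⁻¹ + (1 - ((p:ℝ)^N)⁻¹) * ((p:ℝ)^s - b) := by
    have h1 : (∫ u in Sset p N, Bcut p N μ s u ∂μ) = ∫ u in Sset p N, g u ∂μ :=
      setIntegral_congr_fun measurableSet_S hBcut
    have h2 : (∫ u in Sset p N, g u ∂μ)
        = (∫ u in Tset p N, g u ∂μ) + ∫ u in Sset p N \ Tset p N, g u ∂μ := by
      rw [← Set.union_diff_cancel hTS]
      rw [MeasureTheory.setIntegral_union disjoint_sdiff_self_right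
        (measurableSet_S.diff measurableSet_T) hIT hID]
      rw [Set.union_diff_cancel hTS]
    have h3 : (∫ u in Tset p N, g u ∂μ) = ((p:ℝ)^N)⁻¹ * ((p:ℝ)^s - 1) := by
      have h3' : (∫ u in Tset p N, g u ∂μ) = ∫ _ in Tset p N, ((p:ℝ)^s - 1) ∂μ :=
        setIntegral_congr_fun measurableSet_T (fun x hx => by rw [hg]; exact if_pos hx)
      rw [h3', setIntegral_const, measureReal_def, hTr, smul_eq_mul]
    have h4 : (∫ u in Sset p N \ Tset p N, g u ∂μ)
        = (1 - ((p:ℝ)^N)⁻¹) * ((p:ℝ)^s - b) := by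
      have h4' : (∫ u in Sset p N \ Tset p N, g u ∂μ)
          = ∫ _ in Sset p N \ Tset p N, ((p:ℝ)^s - b) ∂μ :=
        setIntegral_congr_fun (measurableSet_S.diff measurableSet_T)
          (fun x hx => by rw [hg]; exact if_neg hx.2)
      rw [h4', setIntegral_const, measureReal_def, hDr, smul_eq_mul]
    rw [h1, h2, h3, h4]
    ring
  constructor
  · exact hmain
  · have h2 : 0 < ((p:ℝ)^s - 1) * ((p:ℝ)^N)⁻¹ :=
      mul_pos (by linarith) (inv_pos.2 hPNpos)
    have h4 : 0 ≤ (1 - ((p:ℝ)^N)⁻¹) * ((p:ℝ)^s - b) :=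
      mul_nonneg (by linarith) (by linarith)
    linarith
end

section
/- Let s > 0 be real and N ≥ 1, let B_0(s, y) := p^s · B(s, p·y) - B(s, y), and let R ⊆ ℤ_p^N be any complete set of representatives of the p^N cosets of (pℤ_p)^N in ℤ_p^N. Then for every y ∈ ℚ_p^N, Σ_{z ∈ R} B_0(s, y + z) = c_N(s) · 𝟙_{ℤ_p^N}(y), where c_N(s) = (p^s - 1) + (p^N - 1)·(p^s - b(s)) > 0 and 𝟙_{ℤ_p^N} is the indicator function of ℤ_p^N. -/
open MeasureTheory
open scoped ENNReal

namespace Stmt9aux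

set_option linter.unusedSectionVars false
variable {p : ℕ} [hp : Fact p.Prime] {N : ℕ}

def S' (p : ℕ) [Fact p.Prime] (N : ℕ) : Set (Fin N → ℚ_[p]) := {lam | ∀ i, ‖lam i‖ ≤ 1}

lemma one_lt_p : (1:ℝ) < p := by exact_mod_cast hp.out.one_lt

lemma p_pos : (0:ℝ) < p := lt_trans one_pos one_lt_p

/-- discreteness -/
lemma norm_lt_iff (x : ℚ_[p]) (n : ℤ) : ‖x‖ < (p:ℝ)^n ↔ ‖x‖ ≤ (p:ℝ)^(n-1) := by
  rw [Padic.norm_le_pow_iff_norm_lt_pow_add_one, sub_add_cancel]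

lemma norm_one_add {t : ℚ_[p]} (ht : ‖t‖ < 1) : ‖1 + t‖ = 1 := by
  rw [add_comm]
  rw [Padic.add_eq_max_of_ne (by rw [norm_one]; exact ne_of_lt ht)]
  simp [le_of_lt ht]

lemma norm_add_le_one {a b : ℚ_[p]} (ha : ‖a‖ ≤ 1) (hb : ‖b‖ ≤ 1) : ‖a + b‖ ≤ 1 :=
  le_trans (Padic.nonarchimedean a b) (max_le ha hb)

lemma mem_S_add {a b : ℚ_[p]} (hb : ‖b‖ ≤ 1) : ‖a + b‖ ≤ 1 ↔ ‖a‖ ≤ 1 := by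
  constructor
  · intro h
    have : a = (a + b) + (-b) := by ring
    rw [this]
    exact norm_add_le_one h (by simpa using hb)
  · intro h; exact norm_add_le_one h hb

lemma norm_sum_le_one {lam y : Fin N → ℚ_[p]} (hl : lam ∈ S' p N) (hy : y ∈ S' p N) :
    ‖∑ i, lam i * y i‖ ≤ 1 := by
  refine IsUltrametricDist.norm_sum_le_of_forall_le_of_nonneg zero_le_one fun i _ => ?_
  rw [norm_mul]
  exact mul_le_one₀ (hl i) (norm_nonneg _) (hy i)


lemma measurableSet_S' : MeasurableSet (S' p N) := by
  have : S' p N = ⋂ i, (fun lam : Fin N → ℚ_[p] => ‖lam i‖) ⁻¹' Set.Iic 1 := by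
    ext lam; simp [S', Set.mem_iInter]
  rw [this]
  exact (isClosed_iInter fun i =>
    IsClosed.preimage ((continuous_apply i).norm) isClosed_Iic).measurableSet

lemma cont_rpow {s : ℝ} (hs : 0 ≤ s) : Continuous (fun x : ℝ => x ^ s) := by
  rw [continuous_iff_continuousAt]
  intro x
  exact Real.continuousAt_rpow_const x s (Or.inr hs)

lemma cont_integrand (s : ℝ) (hs : 0 ≤ s) (c : ℚ_[p]) (y : Fin N → ℚ_[p]) :
    Continuous (fun lam : Fin N → ℚ_[p] => ‖c + ∑ i, lam i * y i‖ ^ s) := by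
  refine (cont_rpow hs).comp ?_
  refine Continuous.norm ?_
  exact continuous_const.add (continuous_finset_sum _ fun i _ => (continuous_apply i).mul continuous_const)

variable (μ : Measure (Fin N → ℚ_[p])) [μ.IsAddHaarMeasure]

lemma integrableOn_integrand (hμ : μ (S' p N) = 1) (s : ℝ) (hs : 0 ≤ s)
    (c : ℚ_[p]) (y : Fin N → ℚ_[p]) :
    IntegrableOn (fun lam => ‖c + ∑ i, lam i * y i‖ ^ s) (S' p N) μ := by
  refine Measure.integrableOn_of_bounded (by rw [hμ]; exact ENNReal.one_ne_top)
    (cont_integrand s hs c y).aestronglyMeasurable (M := (‖c‖ + ∑ i, ‖y i‖) ^ s) ?_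
  rw [ae_restrict_iff' (measurableSet_S' )]
  refine Filter.Eventually.of_forall fun lam hlam => ?_
  rw [Real.norm_eq_abs, abs_of_nonneg (Real.rpow_nonneg (norm_nonneg _) s)]
  refine Real.rpow_le_rpow (norm_nonneg _) ?_ hs
  refine le_trans (norm_add_le _ _) (add_le_add le_rfl ?_)
  refine le_trans (norm_sum_le _ _) (Finset.sum_le_sum fun i _ => ?_)
  rw [norm_mul]
  exact mul_le_of_le_one_left (norm_nonneg _) (hlam i)

/-- translation invariance of the set-integral over the polydisc. -/
lemma setIntegral_translate (F : (Fin N → ℚ_[p]) → ℝ) (d : Fin N → ℚ_[p])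
    (hd : ∀ i, ‖d i‖ ≤ 1) :
    ∫ lam in S' p N, F (lam + d) ∂μ = ∫ lam in S' p N, F lam ∂μ := by
  have mp : MeasurePreserving (· + d) μ μ := measurePreserving_add_right μ d
  have emb : MeasurableEmbedding (· + d) := (Homeomorph.addRight d).measurableEmbedding
  have hpre : (· + d) ⁻¹' (S' p N) = S' p N := by
    ext lam
    constructor
    · intro h i
      have h2 : ‖lam i + d i‖ ≤ 1 := h i
      have : lam i = (lam i + d i) + (-(d i)) := by ring
      rw [this]
      exact le_trans (Padic.nonarchimedean _ _) (max_le h2 (by simpa using hd i))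
    · intro h i
      exact le_trans (Padic.nonarchimedean _ _) (max_le (h i) (hd i))
  calc ∫ lam in S' p N, F (lam + d) ∂μ
      = ∫ lam in (· + d) ⁻¹' (S' p N), F (lam + d) ∂μ := by rw [hpre]
    _ = ∫ lam in S' p N, F lam ∂μ := mp.setIntegral_preimage_emb emb F _


lemma Bfun_eq_one (hμ : μ (S' p N) = 1) (s : ℝ) {y : Fin N → ℚ_[p]}
    (hy : ∀ i, ‖y i‖ ≤ (p:ℝ)⁻¹) : Bfun p N μ s y = 1 := by
  have hcong : Set.EqOn (fun lam : Fin N → ℚ_[p] => ‖1 + ∑ i, lam i * y i‖ ^ s)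
      (fun _ => (1:ℝ)) (S' p N) := by
    intro lam hl
    have hsum : ‖∑ i, lam i * y i‖ < 1 := by
      refine lt_of_le_of_lt ?_ (inv_lt_one_of_one_lt₀ (one_lt_p (p := p)))
      refine IsUltrametricDist.norm_sum_le_of_forall_le_of_nonneg
        (inv_nonneg.mpr (le_of_lt p_pos)) fun i _ => ?_
      rw [norm_mul]
      calc ‖lam i‖ * ‖y i‖ ≤ 1 * (p:ℝ)⁻¹ :=
            mul_le_mul (hl i) (hy i) (norm_nonneg _) zero_le_one
        _ = (p:ℝ)⁻¹ := one_mul _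
    simp only []
    rw [norm_one_add hsum, Real.one_rpow]
  show (∫ lam in S' p N, ‖1 + ∑ i, lam i * y i‖ ^ s ∂μ) = 1
  rw [setIntegral_congr_fun measurableSet_S' hcong, setIntegral_const, measureReal_def, hμ]
  simp

/-- the subgroup-type sets `C_k` -/
def Ck (y : Fin N → ℚ_[p]) (k : ℕ) : Set (Fin N → ℚ_[p]) :=
  {lam | lam ∈ S' p N ∧ ‖∑ i, lam i * y i‖ ≤ (p:ℝ)^(-(k:ℤ))}

lemma measurableSet_Ck (y : Fin N → ℚ_[p]) (k : ℕ) : MeasurableSet (Ck y k) := by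
  refine MeasurableSet.inter measurableSet_S' ?_
  exact IsClosed.measurableSet <| IsClosed.preimage
    ((continuous_finset_sum _ fun i _ => (continuous_apply i).mul continuous_const).norm)
    isClosed_Iic

lemma measure_Ck (hμ : μ (S' p N) = 1) {y : Fin N → ℚ_[p]} (hy : y ∈ S' p N)
    {i₀ : Fin N} (h1 : ‖y i₀‖ = 1) (k : ℕ) :
    μ (Ck y k) = ((p:ℝ≥0∞)^k)⁻¹ := by
  have hy0 : y i₀ ≠ 0 := by intro h; rw [h, norm_zero] at h1; norm_num at h1
  set c : ℕ → ℚ_[p] := fun j => (j : ℚ_[p]) * (y i₀)⁻¹ with hc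
  have hcn : ∀ j : ℕ, ‖c j‖ ≤ 1 := by
    intro j
    rw [hc, norm_mul, norm_inv, h1]
    simpa using Padic.norm_int_le_one (j : ℤ) (p := p)
  set d : ℕ → (Fin N → ℚ_[p]) := fun j i => if i = i₀ then c j else 0 with hd
  have hdsum : ∀ (j : ℕ) (lam : Fin N → ℚ_[p]),
      ∑ i, (lam + -(d j)) i * y i = (∑ i, lam i * y i) - (j : ℚ_[p]) := by
    intro j lam
    simp only [Pi.add_apply, Pi.neg_apply]
    have : ∑ i, d j i * y i = (j : ℚ_[p]) := by
      rw [hd]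
      simp only [ite_mul, zero_mul]
      rw [Finset.sum_ite_eq' Finset.univ i₀ (fun i => c j * y i)]
      simp only [Finset.mem_univ, if_true, hc]
      rw [mul_assoc, inv_mul_cancel₀ hy0, mul_one]
    calc ∑ i, (lam i + -(d j i)) * y i
        = ∑ i, (lam i * y i) - ∑ i, (d j i * y i) := by
          rw [← Finset.sum_sub_distrib]; congr 1; ext i; ring
      _ = (∑ i, lam i * y i) - (j : ℚ_[p]) := by rw [this]
  set A : ℕ → Set (Fin N → ℚ_[p]) := fun j => (fun lam => lam + -(d j)) ⁻¹' Ck y k with hA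
  have mem_A : ∀ (j : ℕ) (lam : Fin N → ℚ_[p]), lam ∈ A j ↔
      lam ∈ S' p N ∧ ‖(∑ i, lam i * y i) - (j : ℚ_[p])‖ ≤ (p:ℝ)^(-(k:ℤ)) := by
    intro j lam
    rw [hA]
    simp only [Set.mem_preimage]
    show (lam + -(d j)) ∈ S' p N ∧ _ ↔ _
    constructor
    · rintro ⟨hS, hnorm⟩
      refine ⟨fun i => ?_, by rwa [hdsum] at hnorm⟩
      have := hS i
      show ‖lam i‖ ≤ 1
      have heq : lam i = (lam i + -(d j i)) + d j i := by ring
      rw [heq]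
      refine le_trans (Padic.nonarchimedean _ _) (max_le this ?_)
      rw [hd]; dsimp only; split
      · exact hcn j
      · simp
    · rintro ⟨hS, hnorm⟩
      refine ⟨fun i => ?_, by rwa [hdsum]⟩
      show ‖lam i + -(d j i)‖ ≤ 1
      refine le_trans (Padic.nonarchimedean _ _) (max_le (hS i) ?_)
      rw [norm_neg, hd]; dsimp only; split
      · exact hcn j
      · simp
  have hdisj : (↑(Finset.range (p^k)) : Set ℕ).PairwiseDisjoint A := by
    intro j hj j' hj' hne
    simp only [Finset.coe_range, Set.mem_Iio] at hj hj'
    refine Set.disjoint_left.mpr fun lam hl hl' => hne ?_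
    rw [mem_A] at hl hl'
    have hsub : ‖((j:ℚ_[p]) - (j':ℚ_[p]))‖ ≤ (p:ℝ)^(-(k:ℤ)) := by
      have : (j:ℚ_[p]) - (j':ℚ_[p])
          = ((∑ i, lam i * y i) - (j' : ℚ_[p])) + -((∑ i, lam i * y i) - (j : ℚ_[p])) := by ring
      rw [this]
      refine le_trans (Padic.nonarchimedean _ _) (max_le hl'.2 ?_)
      rw [norm_neg]; exact hl.2
    have hdvd : (p:ℤ)^k ∣ ((j:ℤ) - (j':ℤ)) := by
      rw [← Padic.norm_int_le_pow_iff_dvd]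
      push_cast
      push_cast at hsub
      exact hsub
    have hpk : ((p^k : ℕ) : ℤ) = (p:ℤ)^k := by push_cast; ring
    have := Int.eq_zero_of_abs_lt_dvd hdvd (by rw [← hpk, abs_lt]; omega)
    omega
  have hunion : (⋃ j ∈ Finset.range (p^k), A j) = S' p N := by
    ext lam
    simp only [Set.mem_iUnion, Finset.mem_range]
    constructor
    · rintro ⟨j, _, hj⟩; exact ((mem_A j lam).mp hj).1
    · intro hl
      have hx : ‖∑ i, lam i * y i‖ ≤ 1 := norm_sum_le_one hl hy
      set X : ℤ_[p] := ⟨∑ i, lam i * y i, hx⟩ with hX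
      refine ⟨X.appr k, X.appr_lt k, (mem_A _ lam).mpr ⟨hl, ?_⟩⟩
      have hspec : X - (X.appr k : ℤ_[p]) ∈ Ideal.span {(p:ℤ_[p])^k} := X.appr_spec k
      have hnorm : ‖X - (X.appr k : ℤ_[p])‖ ≤ (p:ℝ)^(-(k:ℤ)) :=
        (PadicInt.norm_le_pow_iff_mem_span_pow _ k).mpr hspec
      rw [PadicInt.norm_def] at hnorm
      have heq : (∑ i, lam i * y i) - ((X.appr k : ℕ) : ℚ_[p])
          = ((X - ((X.appr k : ℕ) : ℤ_[p]) : ℤ_[p]) : ℚ_[p]) := by rw [PadicInt.coe_sub, PadicInt.coe_natCast]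
      rw [heq]
      exact hnorm
  have hmeasA : ∀ j, μ (A j) = μ (Ck y k) := fun j =>
    measure_preimage_add_right μ (-(d j)) (Ck y k)
  have hcount : (1:ℝ≥0∞) = (p^k : ℕ) * μ (Ck y k) := by
    calc (1:ℝ≥0∞) = μ (S' p N) := hμ.symm
      _ = μ (⋃ j ∈ Finset.range (p^k), A j) := by rw [hunion]
      _ = ∑ j ∈ Finset.range (p^k), μ (A j) := by
          refine measure_biUnion_finset hdisj fun j _ => ?_
          exact (measurable_add_const (-(d j))) (measurableSet_Ck y k)
      _ = (p^k : ℕ) * μ (Ck y k) := by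
          simp [hmeasA, Finset.sum_const, nsmul_eq_mul]
  have hne : ((p^k : ℕ) : ℝ≥0∞) ≠ 0 := by
    simp [pow_ne_zero, hp.out.ne_zero]
  calc μ (Ck y k) = ((p^k : ℕ) : ℝ≥0∞)⁻¹ * ((p^k : ℕ) * μ (Ck y k)) := by
        rw [← mul_assoc, ENNReal.inv_mul_cancel hne (by simp), one_mul]
    _ = ((p:ℝ≥0∞)^k)⁻¹ := by rw [← hcount, mul_one]; norm_cast

lemma Ck_antitone {y : Fin N → ℚ_[p]} : ∀ {k l : ℕ}, k ≤ l → Ck (p := p) y l ⊆ Ck y k := by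
  intro k l hkl lam hl
  refine ⟨hl.1, le_trans hl.2 ?_⟩
  exact zpow_le_zpow_right₀ (le_of_lt (one_lt_p (p := p))) (by omega)

lemma setIntegral_norm_sum (hμ : μ (S' p N) = 1) {s : ℝ} (hs : 0 < s)
    {y : Fin N → ℚ_[p]} (hy : y ∈ S' p N) {i₀ : Fin N} (h1 : ‖y i₀‖ = 1) :
    ∫ lam in S' p N, ‖∑ i, lam i * y i‖ ^ s ∂μ
      = (1 - (p:ℝ)⁻¹) / (1 - (p:ℝ) ^ (-(s + 1))) := by
  classical
  have hp0 : (0:ℝ) < p := p_pos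
  have hp1 : (1:ℝ) < p := one_lt_p
  set g : (Fin N → ℚ_[p]) → ℝ := fun lam => ‖∑ i, lam i * y i‖ ^ s with hg
  set T : ℕ → Set (Fin N → ℚ_[p]) := fun k => Ck y k \ Ck y (k+1) with hT
  set Z : Set (Fin N → ℚ_[p]) := ⋂ k, Ck y k with hZ
  have hmeasT : ∀ k, MeasurableSet (T k) :=
    fun k => (measurableSet_Ck y k).diff (measurableSet_Ck y (k+1))
  have hmeasZ : MeasurableSet Z := MeasurableSet.iInter fun k => measurableSet_Ck y k
  have hμCk : ∀ k, μ (Ck y k) = ((p:ℝ≥0∞)^k)⁻¹ := measure_Ck μ hμ hy h1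
  -- μ Z = 0
  have hμZ : μ Z = 0 := by
    refine le_antisymm ?_ (zero_le)
    have hb : ∀ k : ℕ, μ Z ≤ ((p:ℝ≥0∞)⁻¹)^k := fun k => by
      rw [← ENNReal.inv_pow]
      exact le_trans (measure_mono (Set.iInter_subset _ k)) (le_of_eq (hμCk k))
    refine ge_of_tendsto' (ENNReal.tendsto_pow_atTop_nhds_zero_of_lt_one ?_) hb
    rw [ENNReal.inv_lt_one]
    exact_mod_cast hp.out.one_lt
  -- decomposition
  have hdecomp : S' p N = (⋃ k, T k) ∪ Z := by
    ext lam
    constructor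
    · intro hl
      by_cases hall : ∀ k, lam ∈ Ck y k
      · exact Or.inr (Set.mem_iInter.mpr hall)
      · left
        push_neg at hall
        have hex : ∃ k, lam ∉ Ck y k := hall
        have h0 : lam ∈ Ck y 0 := by
          refine ⟨hl, ?_⟩
          rw [Nat.cast_zero, neg_zero, zpow_zero]
          exact norm_sum_le_one hl hy
        set n := Nat.find hex with hn
        have hnspec : lam ∉ Ck y n := Nat.find_spec hex
        have hnpos : n ≠ 0 := fun h => hnspec (h ▸ h0)
        refine Set.mem_iUnion.mpr ⟨n - 1, ?_, ?_⟩
        · exact of_not_not fun h => Nat.find_min hex (by omega) h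
        · have : n - 1 + 1 = n := by omega
          rw [this]; exact hnspec
    · rintro (h | h)
      · obtain ⟨k, hk⟩ := Set.mem_iUnion.mp h
        exact hk.1.1
      · exact (Set.mem_iInter.mp h 0).1
  -- integrability
  have hint : IntegrableOn g (S' p N) μ := by
    have h0 := integrableOn_integrand μ hμ s (le_of_lt hs) 0 y
    have : (fun lam : Fin N → ℚ_[p] => ‖0 + ∑ i, lam i * y i‖ ^ s) = g := by
      funext lam; rw [zero_add]
    rwa [this] at h0
  have hintU : IntegrableOn g (⋃ k, T k) μ := by
    refine hint.mono_set ?_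
    rw [hdecomp]; exact Set.subset_union_left
  have hintZ : IntegrableOn g Z μ := by
    refine hint.mono_set ?_
    rw [hdecomp]; exact Set.subset_union_right
  -- pairwise disjoint
  have hTdisj : Pairwise (Function.onFun Disjoint T) := by
    have key : ∀ {k l : ℕ}, k < l → Disjoint (T k) (T l) := by
      intro k l hkl
      refine Set.disjoint_left.mpr fun lam hk hl => ?_
      exact hk.2 (Ck_antitone (by omega) hl.1)
    intro k l hne
    rcases hne.lt_or_gt with h | h
    · exact key h
    · exact (key h).symm
  have hdisjUZ : Disjoint (⋃ k, T k) Z := by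
    refine Set.disjoint_left.mpr fun lam hk hz => ?_
    obtain ⟨k, hk⟩ := Set.mem_iUnion.mp hk
    exact hk.2 (Set.mem_iInter.mp hz (k+1))
  -- split the integral
  have hsplit : ∫ lam in S' p N, g lam ∂μ = ∑' k, ∫ lam in T k, g lam ∂μ := by
    rw [hdecomp, setIntegral_union hdisjUZ hmeasZ hintU hintZ,
      Measure.restrict_eq_zero.mpr hμZ, integral_zero_measure, add_zero]
    exact integral_iUnion hmeasT hTdisj hintU
  -- each piece
  have hμT : ∀ k, μ (T k) = ((p:ℝ≥0∞)^k)⁻¹ - ((p:ℝ≥0∞)^(k+1))⁻¹ := by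
    intro k
    rw [hT]
    rw [measure_diff (Ck_antitone (by omega)) (measurableSet_Ck y (k+1)).nullMeasurableSet
      (by rw [hμCk]; exact ENNReal.inv_ne_top.mpr (by simp [pow_ne_zero, hp.out.ne_zero])), hμCk, hμCk]
  have hμT_toReal : ∀ k, (μ (T k)).toReal = ((p:ℝ)^k)⁻¹ - ((p:ℝ)^(k+1))⁻¹ := by
    intro k
    rw [hμT k]
    rw [ENNReal.toReal_sub_of_le]
    · congr 1 <;> simp [ENNReal.toReal_inv]
    · exact ENNReal.inv_le_inv.mpr (by
        refine pow_le_pow_right₀ ?_ (by omega)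
        exact_mod_cast hp.out.one_le)
    · exact ENNReal.inv_ne_top.mpr (by simp [pow_ne_zero, hp.out.ne_zero])
  have hpiece : ∀ k, ∫ lam in T k, g lam ∂μ
      = ((p:ℝ)^(-(k:ℤ)))^s * (((p:ℝ)^k)⁻¹ - ((p:ℝ)^(k+1))⁻¹) := by
    intro k
    have hconst : Set.EqOn g (fun _ => ((p:ℝ)^(-(k:ℤ)))^s) (T k) := by
      intro lam hl
      have hub : ‖∑ i, lam i * y i‖ ≤ (p:ℝ)^(-(k:ℤ)) := hl.1.2
      have hlb : ¬ ‖∑ i, lam i * y i‖ < (p:ℝ)^(-(k:ℤ)) := by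
        intro hcon
        refine hl.2 ⟨hl.1.1, ?_⟩
        rw [norm_lt_iff] at hcon
        refine le_trans hcon (le_of_eq ?_)
        congr 1
        push_cast
        ring
      have : ‖∑ i, lam i * y i‖ = (p:ℝ)^(-(k:ℤ)) := le_antisymm hub (not_lt.mp hlb)
      rw [hg]; dsimp only; rw [this]
    rw [setIntegral_congr_fun (hmeasT k) hconst, setIntegral_const, smul_eq_mul,
      measureReal_def, hμT_toReal k, mul_comm]
  -- sum the geometric series
  set r : ℝ := (p:ℝ) ^ (-(s+1)) with hr
  have hr0 : 0 ≤ r := Real.rpow_nonneg (le_of_lt hp0) _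
  have hr1 : r < 1 := Real.rpow_lt_one_of_one_lt_of_neg hp1 (by linarith)
  have hterm : ∀ k : ℕ, ((p:ℝ)^(-(k:ℤ)))^s * (((p:ℝ)^k)⁻¹ - ((p:ℝ)^(k+1))⁻¹)
      = (1 - (p:ℝ)⁻¹) * r^k := by
    intro k
    have e1 : ((p:ℝ)^(-(k:ℤ)))^s = (p:ℝ) ^ (-(k:ℝ)*s) := by
      rw [← Real.rpow_intCast (p:ℝ) (-(k:ℤ)), ← Real.rpow_mul (le_of_lt hp0)]
      push_cast
      ring_nf
    have e2 : ((p:ℝ)^k)⁻¹ = (p:ℝ) ^ (-(k:ℝ)) := by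
      rw [← Real.rpow_natCast (p:ℝ) k, ← Real.rpow_neg (le_of_lt hp0)]
    have e3 : ((p:ℝ)^(k+1))⁻¹ = (p:ℝ) ^ (-(k:ℝ)) * (p:ℝ)⁻¹ := by
      rw [pow_succ, mul_inv, e2]
    have e4 : r^k = (p:ℝ) ^ (-(s+1)*(k:ℝ)) := by
      rw [hr, ← Real.rpow_natCast ((p:ℝ) ^ (-(s+1))) k, ← Real.rpow_mul (le_of_lt hp0)]
    rw [e1, e2, e3, e4]
    calc (p:ℝ)^(-(k:ℝ)*s) * ((p:ℝ)^(-(k:ℝ)) - (p:ℝ)^(-(k:ℝ)) * (p:ℝ)⁻¹)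
        = ((p:ℝ)^(-(k:ℝ)*s) * (p:ℝ)^(-(k:ℝ))) * (1 - (p:ℝ)⁻¹) := by ring
      _ = (p:ℝ)^(-(s+1)*(k:ℝ)) * (1 - (p:ℝ)⁻¹) := by
          rw [← Real.rpow_add hp0, show -(k:ℝ)*s + -(k:ℝ) = -(s+1)*(k:ℝ) by ring]
      _ = (1 - (p:ℝ)⁻¹) * (p:ℝ)^(-(s+1)*(k:ℝ)) := by ring
  calc ∫ lam in S' p N, ‖∑ i, lam i * y i‖ ^ s ∂μ
      = ∑' k, ∫ lam in T k, g lam ∂μ := hsplit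
    _ = ∑' k : ℕ, (1 - (p:ℝ)⁻¹) * r^k := by
        congr 1; funext k; rw [hpiece k, hterm k]
    _ = (1 - (p:ℝ)⁻¹) * (1 - r)⁻¹ := by
        rw [tsum_mul_left, tsum_geometric_of_lt_one hr0 hr1]
    _ = (1 - (p:ℝ)⁻¹) / (1 - (p:ℝ) ^ (-(s + 1))) := by rw [div_eq_mul_inv, hr]

lemma sum_add_single (lam y : Fin N → ℚ_[p]) (i₀ : Fin N) (c : ℚ_[p]) :
    ∑ i, (lam + fun i => if i = i₀ then c else 0) i * y i
      = (∑ i, lam i * y i) + c * y i₀ := by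
  simp only [Pi.add_apply, add_mul]
  rw [Finset.sum_add_distrib]
  congr 1
  simp only [ite_mul, zero_mul]
  rw [Finset.sum_ite_eq' Finset.univ i₀ (fun i => c * y i)]
  simp

lemma Bfun_eq_b (hμ : μ (S' p N) = 1) {s : ℝ} (hs : 0 < s)
    {y : Fin N → ℚ_[p]} (hy : y ∈ S' p N) {i₀ : Fin N} (h1 : ‖y i₀‖ = 1) :
    Bfun p N μ s y = (1 - (p:ℝ)⁻¹) / (1 - (p:ℝ) ^ (-(s + 1))) := by
  have hy0 : y i₀ ≠ 0 := by intro h; rw [h, norm_zero] at h1; norm_num at h1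
  set d : Fin N → ℚ_[p] := fun i => if i = i₀ then -(y i₀)⁻¹ else 0 with hd
  have hdn : ∀ i, ‖d i‖ ≤ 1 := by
    intro i
    rw [hd]; dsimp only; split
    · rw [norm_neg, norm_inv, h1]; norm_num
    · simp
  have key := setIntegral_translate μ (fun lam => ‖1 + ∑ i, lam i * y i‖ ^ s) d hdn
  have heq : ∀ lam : Fin N → ℚ_[p],
      ‖1 + ∑ i, (lam + d) i * y i‖ ^ s = ‖∑ i, lam i * y i‖ ^ s := by
    intro lam
    rw [hd, sum_add_single]
    congr 2
    rw [neg_mul, inv_mul_cancel₀ hy0]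
    ring
  calc Bfun p N μ s y = ∫ lam in S' p N, ‖1 + ∑ i, lam i * y i‖ ^ s ∂μ := rfl
    _ = ∫ lam in S' p N, ‖1 + ∑ i, (lam + d) i * y i‖ ^ s ∂μ := key.symm
    _ = ∫ lam in S' p N, ‖∑ i, lam i * y i‖ ^ s ∂μ := by
        refine setIntegral_congr_fun measurableSet_S' fun lam _ => heq lam
    _ = (1 - (p:ℝ)⁻¹) / (1 - (p:ℝ) ^ (-(s + 1))) := setIntegral_norm_sum μ hμ hs hy h1

lemma norm_p_mul (x : ℚ_[p]) : ‖(p:ℚ_[p]) * x‖ = (p:ℝ)⁻¹ * ‖x‖ := by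
  rw [norm_mul, Padic.norm_p]

lemma Bcut_of_small (hμ : μ (S' p N) = 1) (s : ℝ) {y : Fin N → ℚ_[p]}
    (hy : ∀ i, ‖y i‖ ≤ (p:ℝ)⁻¹) : Bcut p N μ s y = (p:ℝ) ^ s - 1 := by
  have hpinv : (p:ℝ)⁻¹ ≤ 1 := le_of_lt (inv_lt_one_of_one_lt₀ (one_lt_p (p := p)))
  have h2 : ∀ i, ‖(p:ℚ_[p]) * y i‖ ≤ (p:ℝ)⁻¹ := by
    intro i
    rw [norm_p_mul]
    calc (p:ℝ)⁻¹ * ‖y i‖ ≤ (p:ℝ)⁻¹ * 1 := by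
          refine mul_le_mul_of_nonneg_left ?_ (by positivity)
          exact le_trans (hy i) hpinv
      _ = (p:ℝ)⁻¹ := mul_one _
  rw [Bcut, Bfun_eq_one μ hμ s h2, Bfun_eq_one μ hμ s hy, mul_one]

lemma Bcut_of_unit (hμ : μ (S' p N) = 1) {s : ℝ} (hs : 0 < s) {y : Fin N → ℚ_[p]}
    (hy : y ∈ S' p N) {i₀ : Fin N} (h1 : ‖y i₀‖ = 1) :
    Bcut p N μ s y = (p:ℝ) ^ s - (1 - (p:ℝ)⁻¹) / (1 - (p:ℝ) ^ (-(s + 1))) := by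
  have h2 : ∀ i, ‖(p:ℚ_[p]) * y i‖ ≤ (p:ℝ)⁻¹ := by
    intro i
    rw [norm_p_mul]
    calc (p:ℝ)⁻¹ * ‖y i‖ ≤ (p:ℝ)⁻¹ * 1 :=
          mul_le_mul_of_nonneg_left (hy i) (by positivity)
      _ = (p:ℝ)⁻¹ := mul_one _
  rw [Bcut, Bfun_eq_one μ hμ s h2, Bfun_eq_b μ hμ hs hy h1, mul_one]

lemma Bcut_of_big (hμ : μ (S' p N) = 1) {s : ℝ} (hs : 0 < s) {y : Fin N → ℚ_[p]}
    {i₀ : Fin N} (hbig : (p:ℝ) ≤ ‖y i₀‖) : Bcut p N μ s y = 0 := by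
  have hp0 : (0:ℝ) < p := p_pos
  have hy0 : y i₀ ≠ 0 := by
    intro h; rw [h, norm_zero] at hbig; linarith
  have hpQ : (p:ℚ_[p]) ≠ 0 := by exact_mod_cast hp.out.ne_zero
  have hnormpinv : ‖(p:ℚ_[p])⁻¹‖ = (p:ℝ) := by
    rw [norm_inv, Padic.norm_p, inv_inv]
  -- rewrite p^s * Bfun (p • y) as an integral of ‖p⁻¹ + ∑ λ y‖^s
  have step1 : (p:ℝ) ^ s * Bfun p N μ s (fun i => (p:ℚ_[p]) * y i)
      = ∫ lam in S' p N, ‖(p:ℚ_[p])⁻¹ + ∑ i, lam i * y i‖ ^ s ∂μ := by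
    rw [Bfun, ← integral_const_mul]
    refine setIntegral_congr_fun measurableSet_S' fun lam _ => ?_
    have hfact : (p:ℚ_[p])⁻¹ + ∑ i, lam i * y i
        = (p:ℚ_[p])⁻¹ * (1 + ∑ i, lam i * ((p:ℚ_[p]) * y i)) := by
      rw [mul_add, mul_one, Finset.mul_sum]
      congr 1
      refine Finset.sum_congr rfl fun i _ => ?_
      field_simp
    show (p:ℝ) ^ s * ‖1 + ∑ i, lam i * ((p:ℚ_[p]) * y i)‖ ^ s = _
    rw [hfact, norm_mul, hnormpinv, Real.mul_rpow (le_of_lt hp0) (norm_nonneg _)]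
  -- translation
  set d : Fin N → ℚ_[p] := fun i => if i = i₀ then ((p:ℚ_[p])⁻¹ - 1) * (y i₀)⁻¹ else 0 with hd
  have hdn : ∀ i, ‖d i‖ ≤ 1 := by
    intro i
    rw [hd]; dsimp only; split
    · rw [norm_mul, norm_inv]
      have hne : ‖(p:ℚ_[p])⁻¹‖ ≠ ‖(-1 : ℚ_[p])‖ := by
        rw [hnormpinv, norm_neg, norm_one]
        exact ne_of_gt (one_lt_p (p := p))
      have : ‖(p:ℚ_[p])⁻¹ - 1‖ = (p:ℝ) := by
        rw [sub_eq_add_neg, Padic.add_eq_max_of_ne hne, hnormpinv, norm_neg, norm_one]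
        exact max_eq_left (le_of_lt (one_lt_p (p := p)))
      rw [this]
      have hny : (0:ℝ) < ‖y i₀‖ := lt_of_lt_of_le hp0 hbig
      calc (p:ℝ) * ‖y i₀‖⁻¹ ≤ ‖y i₀‖ * ‖y i₀‖⁻¹ :=
            mul_le_mul_of_nonneg_right hbig (by positivity)
        _ = 1 := mul_inv_cancel₀ (ne_of_gt hny)
    · simp
  have key := setIntegral_translate μ
    (fun lam => ‖1 + ∑ i, lam i * y i‖ ^ s) d hdn
  have heq : ∀ lam : Fin N → ℚ_[p],
      ‖1 + ∑ i, (lam + d) i * y i‖ ^ s = ‖(p:ℚ_[p])⁻¹ + ∑ i, lam i * y i‖ ^ s := by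
    intro lam
    rw [hd, sum_add_single]
    congr 2
    rw [mul_assoc, inv_mul_cancel₀ hy0, mul_one]
    ring
  have key' : ∫ lam in S' p N, ‖1 + ∑ i, (lam + d) i * y i‖ ^ s ∂μ
      = Bfun p N μ s y := key
  have step2 : ∫ lam in S' p N, ‖(p:ℚ_[p])⁻¹ + ∑ i, lam i * y i‖ ^ s ∂μ
      = Bfun p N μ s y := by
    rw [← key']
    exact (setIntegral_congr_fun measurableSet_S' fun lam _ => heq lam).symm
  rw [Bcut, step1, step2, sub_self]

lemma norm_eq_one_of {x : ℚ_[p]} (h1 : ‖x‖ ≤ 1) (h2 : ¬ ‖x‖ ≤ (p:ℝ)⁻¹) : ‖x‖ = 1 := by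
  have hiff := norm_lt_iff x 0
  rw [zpow_zero, show (0:ℤ) - 1 = -1 by ring, zpow_neg_one] at hiff
  exact le_antisymm h1 (not_lt.mp (fun h => h2 (hiff.mp h)))

lemma p_le_of_one_lt_norm {x : ℚ_[p]} (h : 1 < ‖x‖) : (p:ℝ) ≤ ‖x‖ := by
  have hiff := norm_lt_iff x 1
  rw [zpow_one, show (1:ℤ) - 1 = 0 by ring, zpow_zero] at hiff
  exact not_lt.mp (fun hc => not_lt.mpr (hiff.mp hc) h)

lemma toZMod_eq_iff (A B : ℤ_[p]) :
    PadicInt.toZMod A = PadicInt.toZMod B ↔ ‖A - B‖ ≤ (p:ℝ)⁻¹ := by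
  have : PadicInt.toZMod A = PadicInt.toZMod B ↔ A - B ∈ RingHom.ker (PadicInt.toZMod (p := p)) := by
    rw [RingHom.mem_ker, map_sub, sub_eq_zero]
  rw [this, PadicInt.ker_toZMod, PadicInt.maximalIdeal_eq_span_p]
  rw [show ((p:ℝ)⁻¹) = (p:ℝ)^(-(1:ℕ):ℤ) by simp]
  rw [PadicInt.norm_le_pow_iff_mem_span_pow, pow_one]

lemma card_R (R : Finset (Fin N → ℚ_[p]))
    (hRmem : ∀ z ∈ R, ∀ i, ‖z i‖ ≤ 1)
    (hRrep : ∀ x : Fin N → ℚ_[p], (∀ i, ‖x i‖ ≤ 1) →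
      ∃! z, z ∈ R ∧ ∀ i, ‖x i - z i‖ ≤ (p : ℝ)⁻¹) :
    R.card = p ^ N := by
  classical
  have key : ∀ (a b : ℚ_[p]) (ha : ‖a‖ ≤ 1) (hb : ‖b‖ ≤ 1),
      (PadicInt.toZMod ⟨a, ha⟩ = PadicInt.toZMod ⟨b, hb⟩ ↔ ‖a - b‖ ≤ (p:ℝ)⁻¹) := by
    intro a b ha hb
    have := toZMod_eq_iff (p := p) ⟨a, ha⟩ ⟨b, hb⟩
    rw [PadicInt.norm_def] at this
    exact this
  have := Finset.card_bij
    (i := fun (z : Fin N → ℚ_[p]) (hz : z ∈ R) =>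
      (fun j => PadicInt.toZMod ⟨z j, hRmem z hz j⟩ : Fin N → ZMod p))
    (hi := fun z hz => Finset.mem_univ _)
    (i_inj := ?_) (i_surj := ?_)
  · rw [this, Finset.card_univ, Fintype.card_fun, ZMod.card, Fintype.card_fin]
  · intro z hz z' hz' heq
    have hzz' : ∀ j, ‖z j - z' j‖ ≤ (p:ℝ)⁻¹ := by
      intro j
      rw [← key (z j) (z' j) (hRmem z hz j) (hRmem z' hz' j)]
      exact congrFun heq j
    obtain ⟨w, -, hw⟩ := hRrep z (hRmem z hz)
    have h1 : z = w := hw z ⟨hz, fun i => by simp [inv_nonneg, le_of_lt (p_pos (p := p))]⟩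
    have h2 : z' = w := hw z' ⟨hz', hzz'⟩
    rw [h1, h2]
  · intro b _
    set x : Fin N → ℚ_[p] := fun j => ((b j).val : ℚ_[p]) with hx
    have hxnorm : ∀ j, ‖x j‖ ≤ 1 := by
      intro j
      rw [hx]
      exact_mod_cast Padic.norm_int_le_one ((b j).val : ℤ)
    obtain ⟨z, ⟨hzR, hz⟩, -⟩ := hRrep x hxnorm
    refine ⟨z, hzR, ?_⟩
    funext j
    show PadicInt.toZMod (p := p) ⟨z j, hRmem z hzR j⟩ = b j
    have h1 : PadicInt.toZMod (p := p) ⟨z j, hRmem z hzR j⟩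
        = PadicInt.toZMod ⟨x j, hxnorm j⟩ := by
      rw [key _ _ _ (hxnorm j)]
      have := hz j
      rwa [← norm_neg, neg_sub] at this
    rw [h1]
    have h2 : (⟨x j, hxnorm j⟩ : ℤ_[p]) = (((b j).val : ℕ) : ℤ_[p]) := by
      ext
      push_cast [hx]
      rfl
    rw [h2, map_natCast]
    simp [ZMod.natCast_val, ZMod.cast_id]

end Stmt9aux

open Stmt9aux

/-- For real `s > 0`, `N ≥ 1`, and `R ⊆ ℤ_p^N` a complete set of representatives of the
cosets of `(pℤ_p)^N` in `ℤ_p^N`: for every `y ∈ ℚ_p^N`,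
`Σ_{z ∈ R} B_0(s, y + z) = c_N(s) · 𝟙_{ℤ_p^N}(y)`, where
`c_N(s) = (p^s - 1) + (p^N - 1)·(p^s - b(s)) > 0`, `b(s) = (1 - p⁻¹)/(1 - p^{-(s+1)})`,
and `μ` is the Haar measure on `ℚ_p^N` with `μ(ℤ_p^N) = 1`. -/
theorem stmt9 (p : ℕ) [Fact p.Prime] (N : ℕ) (hN : 1 ≤ N)
    (μ : Measure (Fin N → ℚ_[p])) [μ.IsAddHaarMeasure]
    (hμ : μ {lam : Fin N → ℚ_[p] | ∀ i, ‖lam i‖ ≤ 1} = 1)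
    (s : ℝ) (hs : 0 < s)
    (R : Finset (Fin N → ℚ_[p]))
    (hRmem : ∀ z ∈ R, ∀ i, ‖z i‖ ≤ 1)
    (hRrep : ∀ x : Fin N → ℚ_[p], (∀ i, ‖x i‖ ≤ 1) →
      ∃! z, z ∈ R ∧ ∀ i, ‖x i - z i‖ ≤ (p : ℝ)⁻¹)
    (y : Fin N → ℚ_[p]) :
    (∑ z ∈ R, Bcut p N μ s (y + z))
      = (((p : ℝ) ^ s - 1)
          + ((p : ℝ) ^ N - 1)
            * ((p : ℝ) ^ s - (1 - (p : ℝ)⁻¹) / (1 - (p : ℝ) ^ (-(s + 1)))))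
        * Set.indicator {y : Fin N → ℚ_[p] | ∀ i, ‖y i‖ ≤ 1} (fun _ => (1 : ℝ)) y ∧
    0 < ((p : ℝ) ^ s - 1)
          + ((p : ℝ) ^ N - 1)
            * ((p : ℝ) ^ s - (1 - (p : ℝ)⁻¹) / (1 - (p : ℝ) ^ (-(s + 1)))) := by
  classical
  have hp1 : (1:ℝ) < p := one_lt_p
  have hp0 : (0:ℝ) < p := p_pos
  have hμ' : μ (S' p N) = 1 := hμ
  set b : ℝ := (1 - (p:ℝ)⁻¹) / (1 - (p:ℝ) ^ (-(s + 1))) with hb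
  -- positivity
  have hps : 1 < (p:ℝ) ^ s := Real.one_lt_rpow_iff_of_pos hp0 |>.mpr (Or.inl ⟨hp1, hs⟩)
  have hr1 : (p:ℝ) ^ (-(s+1)) < (p:ℝ)⁻¹ := by
    rw [← Real.rpow_neg_one (p:ℝ)]
    exact Real.rpow_lt_rpow_left_iff hp1 |>.mpr (by linarith)
  have hrpos : (0:ℝ) < (p:ℝ) ^ (-(s+1)) := Real.rpow_pos_of_pos hp0 _
  have hpinv1 : (p:ℝ)⁻¹ < 1 := inv_lt_one_of_one_lt₀ hp1
  have hblt1 : b < 1 := by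
    rw [hb, div_lt_one (by linarith)]
    linarith
  have hpN : 1 < (p:ℝ) ^ N := one_lt_pow₀ hp1 (by omega)
  have hpos : 0 < ((p : ℝ) ^ s - 1) + ((p : ℝ) ^ N - 1) * ((p : ℝ) ^ s - b) := by
    have : 0 < (p:ℝ) ^ s - b := by linarith
    nlinarith
  refine ⟨?_, hpos⟩
  by_cases hy : ∀ i, ‖y i‖ ≤ 1
  · -- y ∈ ℤ_p^N
    rw [Set.indicator_of_mem (by exact hy : y ∈ {y : Fin N → ℚ_[p] | ∀ i, ‖y i‖ ≤ 1}), mul_one]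
    obtain ⟨z₀, ⟨hz₀R, hz₀⟩, hz₀u⟩ := hRrep (-y) (fun i => by
      show ‖-(y i)‖ ≤ 1
      rw [norm_neg]; exact hy i)
    have hsmall : ∀ i, ‖(y + z₀) i‖ ≤ (p:ℝ)⁻¹ := by
      intro i
      have := hz₀ i
      rw [show (-y) i - z₀ i = -((y + z₀) i) by simp; ring, norm_neg] at this
      exact this
    have hval₀ : Bcut p N μ s (y + z₀) = (p:ℝ) ^ s - 1 := Bcut_of_small μ hμ' s hsmall
    have hval : ∀ z ∈ R.erase z₀, Bcut p N μ s (y + z) = (p:ℝ) ^ s - b := by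
      intro z hz
      have hzR := Finset.mem_of_mem_erase hz
      have hzne := Finset.ne_of_mem_erase hz
      have hyz : (y + z) ∈ S' p N := fun i => norm_add_le_one (hy i) (hRmem z hzR i)
      have hnot : ¬ ∀ i, ‖(y + z) i‖ ≤ (p:ℝ)⁻¹ := by
        intro hall
        refine hzne (hz₀u z ⟨hzR, fun i => ?_⟩)
        rw [show (-y) i - z i = -((y + z) i) by simp; ring, norm_neg]
        exact hall i
      push_neg at hnot
      obtain ⟨i₁, hi₁⟩ := hnot
      have h1 : ‖(y + z) i₁‖ = 1 := norm_eq_one_of (hyz i₁) (not_le.mpr hi₁)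
      exact Bcut_of_unit μ hμ' hs hyz h1
    rw [← Finset.add_sum_erase _ _ hz₀R, hval₀, Finset.sum_congr rfl hval,
      Finset.sum_const, Finset.card_erase_of_mem hz₀R,
      card_R R hRmem hRrep, nsmul_eq_mul]
    have hcast : ((p ^ N - 1 : ℕ) : ℝ) = (p:ℝ) ^ N - 1 := by
      have : 1 ≤ p ^ N := Nat.one_le_pow _ _ (Fact.out (p := p.Prime)).pos
      push_cast [this]
      ring
    rw [hcast]
  · -- y ∉ ℤ_p^N
    rw [Set.indicator_of_notMem (by exact hy), mul_zero]
    push_neg at hy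
    obtain ⟨i₀, hi₀⟩ := hy
    refine Finset.sum_eq_zero fun z hz => ?_
    have h1 : ‖(y + z) i₀‖ = ‖y i₀‖ := by
      show ‖y i₀ + z i₀‖ = ‖y i₀‖
      rw [Padic.add_eq_max_of_ne (by
        intro h
        rw [h] at hi₀
        exact absurd (hRmem z hz i₀) (not_le.mpr hi₀))]
      exact max_eq_left (le_trans (hRmem z hz i₀) (le_of_lt hi₀))
    have hbig : (p:ℝ) ≤ ‖(y + z) i₀‖ := by
      rw [h1]
      exact p_le_of_one_lt_norm hi₀
    exact Bcut_of_big μ hμ' hs hbig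
end
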